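/- arXiv:2505.15492 — 5 statements merged into one kernel-verified Lean document; each statement's English description precedes it below -/
import Mathlib

section
/- Let f : [0,1] → ℝ be a C^{2k+5} convex function with f(0) = 0 and f'(0) = 0, satisfying ∑_{j=2}^{k} |f^{(j)}(r)|/j! ≥ m and max_{0 ≤ j ≤ 2k+5} |f^{(j)}(r)| ≤ M for all r ∈ [0,1]. Then there exist constants c, C > 0 depending only on k, m, M such that for all r ∈ [0,1]: c (∑_{j=1}^{k-1} |f^{(j+1)}(0)| r^j / j! + M(k+1) r^{k}) ≤ f'(r) ≤ C (∑_{j=1}^{k-1} |f^{(j+1)}(0)| r^j / j! + M(k+1) r^{k}). -/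
/-!
Write `g = f'`. Convexity makes `g` monotone, and `g 0 = 0`, so `sup_{[0, r]} |g| = g r`. The
Landau–Kolmogorov inequality on `[0, r]` then gives `|g⁽ʲ⁾(0)| rʲ ≤ K (g r + M rᵏ)` for `j ≤ k`.
The finite-type condition at `0` yields some `j < k` with `|g⁽ʲ⁾(0)| ≥ m`; for small `r` this
forces `g r ≳ m rʲ ≥ m rᵏ`, and monotonicity extends `g r ≥ c rᵏ` to all of `[0, 1]`. Hence the
term `M rᵏ` is dominated by `g r`, which gives the lower bound. The upper bound is Taylor's
formula for `g` at `0` with Lagrange remainder.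
-/

open Set
open scoped Nat

noncomputable def landauConst : ℕ → ℝ
  | 0 => 1
  | n + 1 => 8 * landauConst n ^ 2

theorem one_le_landauConst (n : ℕ) : 1 ≤ landauConst n := by
  induction n with
  | zero => simp [landauConst]
  | succ n ih => simp only [landauConst]; nlinarith

theorem abs_deriv_le_of_abs_le_of_abs_deriv_deriv_le {u : ℝ → ℝ} {a b A B h x : ℝ}
    (hu : Differentiable ℝ u) (hu' : Differentiable ℝ (deriv u)) (hh : 0 < h) (hhab : h ≤ b - a)
    (hA : ∀ y ∈ Icc a b, |u y| ≤ A) (hB : ∀ y ∈ Icc a b, |deriv (deriv u) y| ≤ B)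
    (hx : x ∈ Icc a b) : |deriv u x| ≤ 2 * A / h + B * h := by
  -- the mean value theorem on an interval of length `h` inside `[a, b]` containing `x`
  set c := min x (b - h)
  have hsub : Icc c (c + h) ⊆ Icc a b :=
    Icc_subset_Icc (le_min hx.1 (by linarith)) (by linarith [min_le_right x (b - h)])
  have hxc : x ∈ Icc c (c + h) := by
    refine ⟨min_le_left _ _, ?_⟩
    rcases le_total x (b - h) with hxb | hxb
    · rw [show c = x from min_eq_left hxb]; linarith
    · rw [show c = b - h from min_eq_right hxb]; linarith [hx.2]
  obtain ⟨ξ, hξ, hξ_slope⟩ := exists_deriv_eq_slope u (lt_add_of_pos_right c hh)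
    hu.continuous.continuousOn hu.differentiableOn
  have h_slope : |deriv u ξ| ≤ 2 * A / h := by
    rw [hξ_slope, add_sub_cancel_left, abs_div, abs_of_pos hh]
    gcongr
    calc |u (c + h) - u c| ≤ |u (c + h)| + |u c| := abs_sub _ _
      _ ≤ 2 * A := by
        linarith [hA _ (hsub ⟨by linarith, le_rfl⟩), hA _ (hsub ⟨le_rfl, by linarith⟩)]
  have h_lip : |deriv u x - deriv u ξ| ≤ B * h := by
    have hB0 : 0 ≤ B := (abs_nonneg _).trans (hB x hx)
    calc |deriv u x - deriv u ξ| ≤ B * |x - ξ| :=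
          (convex_Icc c (c + h)).norm_image_sub_le_of_norm_deriv_le (fun y _ => hu' y)
            (fun y hy => hB y (hsub hy)) ⟨hξ.1.le, hξ.2.le⟩ hxc
      _ ≤ B * h := by
          gcongr
          rw [abs_sub_le_iff]
          constructor <;> linarith [hξ.1, hξ.2, hxc.1, hxc.2]
  linarith [abs_sub_abs_le_abs_sub (deriv u x) (deriv u ξ)]

theorem abs_deriv_le_of_abs_deriv_deriv_le_self {u : ℝ → ℝ} {a b A K C x : ℝ}
    (hu : Differentiable ℝ u) (hu' : Differentiable ℝ (deriv u)) (hab : a < b) (hK : 1 ≤ K)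
    (hA : ∀ y ∈ Icc a b, |u y| ≤ A)
    (hB : ∀ y ∈ Icc a b, |deriv (deriv u) y| ≤ K * (|deriv u x| / (b - a) + C))
    (hx : x ∈ Icc a b) : |deriv u x| ≤ 8 * K * A / (b - a) + C * (b - a) := by
  have hρ : 0 < b - a := sub_pos.2 hab
  -- with `h = (b - a) / (2K)` the term `|deriv u x|` reappears on the right with coefficient `1/2`
  have h := abs_deriv_le_of_abs_le_of_abs_deriv_deriv_le hu hu'
    (by positivity : 0 < (b - a) / (2 * K)) (div_le_self hρ.le (by linarith)) hA hB hx
  have e : 2 * A / ((b - a) / (2 * K)) + K * (|deriv u x| / (b - a) + C) * ((b - a) / (2 * K)) =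
      4 * K * A / (b - a) + |deriv u x| / 2 + C * (b - a) / 2 := by
    field_simp
    ring
  have : 8 * K * A / (b - a) = 2 * (4 * K * A / (b - a)) := by ring
  linarith

theorem abs_iteratedDeriv_le_landauConst {a b : ℝ} (hab : a < b) (n : ℕ) {u : ℝ → ℝ} {A B : ℝ}
    (hu : ContDiff ℝ n u) (hA : ∀ x ∈ Icc a b, |u x| ≤ A)
    (hB : ∀ x ∈ Icc a b, |iteratedDeriv n u x| ≤ B) {j : ℕ} (hj : j ≤ n) {x : ℝ}
    (hx : x ∈ Icc a b) :
    |iteratedDeriv j u x| ≤ landauConst n * (A / (b - a) ^ j + B * (b - a) ^ (n - j)) := by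
  have hB0 : 0 ≤ B := (abs_nonneg _).trans (hB x hx)
  induction n generalizing u A B j x with
  | zero =>
    obtain rfl : j = 0 := by omega
    simp only [iteratedDeriv_zero, landauConst, Nat.sub_self, pow_zero, div_one, mul_one, one_mul]
    linarith [hA x hx]
  | succ n ih =>
    set ρ := b - a
    have hρ : 0 < ρ := sub_pos.2 hab
    set K := landauConst n
    have hK : 1 ≤ K := one_le_landauConst n
    have hA0 : 0 ≤ A := (abs_nonneg _).trans (hA x hx)
    have hu' : ContDiff ℝ n (deriv u) := (contDiff_succ_iff_deriv.mp hu).2.2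
    have hB' : ∀ x ∈ Icc a b, |iteratedDeriv n (deriv u) x| ≤ B := by
      simpa only [iteratedDeriv_succ'] using hB
    -- the induction hypothesis is applied to `deriv u`, with `A` its maximum `|deriv u x₁|`
    obtain ⟨x₁, hx₁, hmax⟩ := isCompact_Icc.exists_isMaxOn (nonempty_Icc.2 hab.le)
      hu'.continuous.abs.continuousOn
    have hmax' : ∀ y ∈ Icc a b, |deriv u y| ≤ |deriv u x₁| := fun y hy => hmax hy
    have hT : |deriv u x₁| ≤ 8 * K * A / ρ + B * ρ ^ n := by
      rcases n with _ | n
      · have := hB x₁ hx₁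
        rw [zero_add, iteratedDeriv_one] at this
        rw [pow_zero, mul_one]
        linarith [(by positivity : 0 ≤ 8 * K * A / ρ)]
      · rw [pow_succ, ← mul_assoc]
        refine abs_deriv_le_of_abs_deriv_deriv_le_self (hu.differentiable (by simp))
          (hu'.differentiable (by simp)) hab hK hA (fun y hy => ?_) hx₁
        simpa using ih hu' hmax' hB' (j := 1) (by omega) hy hB0
    rcases j with _ | j
    · have hK8 : 1 ≤ 8 * K ^ 2 := by nlinarith
      have hBρ : 0 ≤ B * ρ ^ (n + 1) := by positivity
      simp only [iteratedDeriv_zero, pow_zero, div_one, Nat.sub_zero, landauConst]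
      nlinarith [hA x hx]
    · have hIH := ih hu' hmax' hB' (by omega : j ≤ n) hx hB0
      have e : (8 * K * A / ρ + B * ρ ^ n) / ρ ^ j =
          8 * K * (A / ρ ^ (j + 1)) + B * ρ ^ (n - j) := by
        rw [← pow_sub_mul_pow ρ (by omega : j ≤ n), pow_succ]
        field_simp
      have hBρ : 0 ≤ B * ρ ^ (n - j) := by positivity
      have hAρ : 0 ≤ A / ρ ^ (j + 1) := by positivity
      rw [iteratedDeriv_succ', show n + 1 - (j + 1) = n - j by omega]
      calc |iteratedDeriv j (deriv u) x| ≤ K * (|deriv u x₁| / ρ ^ j + B * ρ ^ (n - j)) := hIH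
        _ ≤ K * ((8 * K * A / ρ + B * ρ ^ n) / ρ ^ j + B * ρ ^ (n - j)) := by gcongr
        _ = K * (8 * K * (A / ρ ^ (j + 1)) + 2 * (B * ρ ^ (n - j))) := by rw [e]; ring
        _ ≤ landauConst (n + 1) * (A / ρ ^ (j + 1) + B * ρ ^ (n - j)) := by
          simp only [landauConst]
          nlinarith [mul_nonneg (mul_nonneg (by linarith : (0 : ℝ) ≤ K)
            (by linarith : (0 : ℝ) ≤ K - 1)) hBρ]

theorem exists_le_of_le_sum_div_factorial {a : ℕ → ℝ} {k : ℕ} {m : ℝ} (hm : 0 < m)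
    (h : m ≤ ∑ j ∈ Finset.Icc 2 k, a j / j !) : ∃ j ∈ Finset.Icc 2 k, m ≤ a j := by
  have hne : (Finset.Icc 2 k).Nonempty := by
    by_contra hempty
    rw [Finset.not_nonempty_iff_eq_empty.1 hempty, Finset.sum_empty] at h
    linarith
  have hfilter : Finset.Icc 2 k = {j ∈ Finset.range (k + 1) | 2 ≤ j} := by
    ext j
    simp only [Finset.mem_Icc, Finset.mem_filter, Finset.mem_range]
    omega
  have hinv : ∑ j ∈ Finset.Icc 2 k, (1 / j ! : ℝ) ≤ 1 := by
    rw [hfilter]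
    exact (Complex.sum_div_factorial_le 2 (k + 1) two_pos).trans (by norm_num [Nat.factorial])
  have hle : ∑ j ∈ Finset.Icc 2 k, m / j ! ≤ ∑ j ∈ Finset.Icc 2 k, a j / j ! := by
    calc ∑ j ∈ Finset.Icc 2 k, m / j ! = m * ∑ j ∈ Finset.Icc 2 k, (1 / j ! : ℝ) := by
          rw [Finset.mul_sum]
          simp only [mul_one_div]
      _ ≤ m := mul_le_of_le_one_right hm.le hinv
      _ ≤ _ := h
  obtain ⟨j, hj, hmj⟩ := Finset.exists_le_of_sum_le hne hle
  exact ⟨j, hj, le_of_mul_le_mul_right (by simpa only [div_eq_mul_inv] using hmj)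
    (by positivity : (0 : ℝ) < (j ! : ℝ)⁻¹)⟩

theorem le_taylor_add_of_iteratedDeriv_le {g : ℝ → ℝ} {n : ℕ} {x₀ x M : ℝ}
    (hg : ContDiff ℝ (n + 1) g) (hx : x₀ < x) (hM : ∀ y ∈ Ioo x₀ x, iteratedDeriv (n + 1) g y ≤ M) :
    g x ≤ ∑ i ∈ Finset.range (n + 1), iteratedDeriv i g x₀ * (x - x₀) ^ i / i ! +
      M * (x - x₀) ^ (n + 1) / (n + 1)! := by
  obtain ⟨y, hy, hy_eq⟩ := taylor_mean_remainder_lagrange_iteratedDeriv hx.ne hg.contDiffOn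
  rw [uIoo_of_lt hx] at hy
  have htaylor : taylorWithinEval g n (uIcc x₀ x) x₀ x =
      ∑ i ∈ Finset.range (n + 1), iteratedDeriv i g x₀ * (x - x₀) ^ i / i ! := by
    rw [taylor_within_apply, uIcc_of_lt hx]
    refine Finset.sum_congr rfl fun i hi => ?_
    have hi : (i : WithTop ℕ∞) ≤ n + 1 := by
      exact_mod_cast (Finset.mem_range.1 hi).le
    rw [iteratedDerivWithin_eq_iteratedDeriv (uniqueDiffOn_Icc hx) (hg.contDiffAt.of_le hi)
      (left_mem_Icc.2 hx.le), smul_eq_mul]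
    ring
  have hrem : iteratedDeriv (n + 1) g y * (x - x₀) ^ (n + 1) / (n + 1)! ≤
      M * (x - x₀) ^ (n + 1) / (n + 1)! := by
    have : 0 ≤ x - x₀ := sub_nonneg.2 hx.le
    gcongr
    exact hM y hy
  linarith

noncomputable def derivMajorant (g : ℝ → ℝ) (k : ℕ) (M r : ℝ) : ℝ :=
  ∑ j ∈ Finset.Icc 1 (k - 1), |iteratedDeriv j g 0| * r ^ j / j ! + M * (k + 1) * r ^ k

theorem derivMajorant_zero (g : ℝ → ℝ) {k : ℕ} (hk : k ≠ 0) (M : ℝ) :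
    derivMajorant g k M 0 = 0 := by
  rw [derivMajorant, zero_pow hk, mul_zero, add_zero]
  refine Finset.sum_eq_zero fun j hj => ?_
  rw [zero_pow (by simp only [Finset.mem_Icc] at hj; omega), mul_zero, zero_div]

section MonotoneDeriv

variable {g : ℝ → ℝ} {k : ℕ} {M : ℝ}

theorem abs_iteratedDeriv_zero_mul_pow_le (hg : ContDiff ℝ k g) (hmono : MonotoneOn g (Icc 0 1))
    (hg0 : g 0 = 0) (hM : ∀ x ∈ Icc 0 1, |iteratedDeriv k g x| ≤ M) {r : ℝ} (hr : r ∈ Ioc 0 1)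
    {j : ℕ} (hj : j ≤ k) :
    |iteratedDeriv j g 0| * r ^ j ≤ landauConst k * (g r + M * r ^ k) := by
  have hsup : ∀ x ∈ Icc 0 r, |g x| ≤ g r := fun x hx => by
    have hx1 : x ∈ Icc (0 : ℝ) 1 := ⟨hx.1, hx.2.trans hr.2⟩
    have hgx : 0 ≤ g x := hg0 ▸ hmono ⟨le_rfl, zero_le_one⟩ hx1 hx.1
    rw [abs_of_nonneg hgx]
    exact hmono hx1 (Ioc_subset_Icc_self hr) hx.2
  have h := abs_iteratedDeriv_le_landauConst hr.1 k hg hsup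
    (fun x hx => hM x ⟨hx.1, hx.2.trans hr.2⟩) hj ⟨le_rfl, hr.1.le⟩
  rw [sub_zero] at h
  have hrj : 0 < r ^ j := pow_pos hr.1 j
  calc |iteratedDeriv j g 0| * r ^ j ≤ landauConst k * (g r / r ^ j + M * r ^ (k - j)) * r ^ j := by
        gcongr
    _ = landauConst k * (g r + M * r ^ k) := by
        rw [← pow_sub_mul_pow r hj]
        field_simp

theorem mul_pow_le_of_le_abs_iteratedDeriv (hg : ContDiff ℝ k g) (hmono : MonotoneOn g (Icc 0 1))
    (hg0 : g 0 = 0) (hM : ∀ x ∈ Icc 0 1, |iteratedDeriv k g x| ≤ M) {m ρ : ℝ} (hρ : ρ ∈ Ioc 0 1)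
    (hρM : landauConst k * M * ρ ≤ m / 2) {j : ℕ} (hjk : j < k) (hmj : m ≤ |iteratedDeriv j g 0|)
    {r : ℝ} (hr : r ∈ Icc 0 1) : m / (2 * landauConst k) * ρ ^ k * r ^ k ≤ g r := by
  have hK : 1 ≤ landauConst k := one_le_landauConst k
  have hm : 0 ≤ m := by
    have : 0 ≤ landauConst k * M * ρ :=
      mul_nonneg (mul_nonneg (by linarith) ((abs_nonneg _).trans (hM 0 ⟨le_rfl, zero_le_one⟩)))
        hρ.1.le
    linarith
  rcases hr.1.eq_or_lt with rfl | hr0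
  · rw [zero_pow (by omega), mul_zero, hg0]
  -- `g` is monotone and `ρ r ≤ min r ρ`, so it suffices to bound `g` at `min r ρ`
  set s := min r ρ
  have hs : s ∈ Ioc 0 1 := ⟨lt_min hr0 hρ.1, (min_le_right _ _).trans hρ.2⟩
  have hρr : ρ * r ≤ s :=
    le_min (mul_le_of_le_one_left hr0.le hρ.2) (mul_le_of_le_one_right hρ.1.le hr.2)
  have hsk : landauConst k * M * s ^ k ≤ m / 2 * s ^ j := by
    have hM0 : 0 ≤ M := (abs_nonneg _).trans (hM 0 ⟨le_rfl, zero_le_one⟩)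
    have hs0 : 0 ≤ s := hs.1.le
    calc landauConst k * M * s ^ k ≤ landauConst k * M * (s ^ j * ρ) := by
          gcongr
          calc s ^ k ≤ s ^ (j + 1) := pow_le_pow_of_le_one hs.1.le hs.2 hjk
            _ = s ^ j * s := pow_succ s j
            _ ≤ s ^ j * ρ := by gcongr; exact min_le_right _ _
      _ = landauConst k * M * ρ * s ^ j := by ring
      _ ≤ m / 2 * s ^ j := by gcongr
  have hL := abs_iteratedDeriv_zero_mul_pow_le hg hmono hg0 hM hs hjk.le
  have hsj : m / 2 * s ^ j ≤ landauConst k * g s := by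
    nlinarith [mul_le_mul_of_nonneg_right hmj (pow_pos hs.1 j).le]
  calc m / (2 * landauConst k) * ρ ^ k * r ^ k = m / (2 * landauConst k) * (ρ * r) ^ k := by ring
    _ ≤ m / (2 * landauConst k) * s ^ k := by gcongr; exact mul_nonneg hρ.1.le hr.1
    _ ≤ m / (2 * landauConst k) * s ^ j :=
        mul_le_mul_of_nonneg_left (pow_le_pow_of_le_one hs.1.le hs.2 hjk.le) (by positivity)
    _ ≤ g s := by
        rw [div_mul_eq_mul_div, div_le_iff₀ (by positivity)]
        linarith
    _ ≤ g r := hmono ⟨hs.1.le, hs.2⟩ ⟨hr.1, hr.2⟩ (min_le_left _ _)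

theorem le_derivMajorant (hg : ContDiff ℝ k g) (hk : k ≠ 0) (hg0 : g 0 = 0)
    (hM : ∀ x ∈ Icc 0 1, |iteratedDeriv k g x| ≤ M) {r : ℝ} (hr : r ∈ Icc 0 1) :
    g r ≤ derivMajorant g k M r := by
  rcases hr.1.eq_or_lt with rfl | hr0
  · rw [hg0, derivMajorant_zero g hk]
  obtain ⟨n, rfl⟩ : ∃ n, k = n + 1 := ⟨k - 1, by omega⟩
  have hM0 : 0 ≤ M := (abs_nonneg _).trans (hM 0 ⟨le_rfl, zero_le_one⟩)
  have htaylor := le_taylor_add_of_iteratedDeriv_le hg hr0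
    (fun y hy => (le_abs_self _).trans (hM y ⟨hy.1.le, hy.2.le.trans hr.2⟩))
  rw [Finset.range_eq_Ico, Finset.sum_eq_sum_Ico_succ_bot n.succ_pos] at htaylor
  simp only [iteratedDeriv_zero, hg0, sub_zero, zero_mul, zero_div, zero_add, Nat.succ_eq_add_one,
    Finset.Ico_add_one_right_eq_Icc] at htaylor
  rw [derivMajorant, Nat.add_sub_cancel]
  refine htaylor.trans (add_le_add (Finset.sum_le_sum fun i _ => ?_) ?_)
  · gcongr
    exact le_abs_self _
  · have hfac : (1 : ℝ) ≤ (n + 1)! := Nat.one_le_cast.2 (Nat.factorial_pos _)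
    calc M * r ^ (n + 1) / (n + 1)! ≤ M * r ^ (n + 1) := div_le_self (by positivity) hfac
      _ ≤ M * ((n + 1 : ℕ) + 1) * r ^ (n + 1) := by
        rw [mul_assoc]
        gcongr
        exact le_mul_of_one_le_left (by positivity) (by linarith [(n + 1 : ℕ).cast_nonneg (α := ℝ)])

theorem derivMajorant_le (hg : ContDiff ℝ k g) (hk : k ≠ 0) (hmono : MonotoneOn g (Icc 0 1))
    (hg0 : g 0 = 0) (hM : ∀ x ∈ Icc 0 1, |iteratedDeriv k g x| ≤ M) {c : ℝ} (hc : 0 < c)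
    (hlower : ∀ r ∈ Icc 0 1, c * r ^ k ≤ g r) {r : ℝ} (hr : r ∈ Icc 0 1) :
    derivMajorant g k M r ≤ (k * landauConst k * (1 + M / c) + (k + 1) * (M / c)) * g r := by
  rcases hr.1.eq_or_lt with rfl | hr0
  · rw [derivMajorant_zero g hk, hg0, mul_zero]
  have hK := one_le_landauConst k
  have hM0 : 0 ≤ M := (abs_nonneg _).trans (hM 0 ⟨le_rfl, zero_le_one⟩)
  have hgr : 0 ≤ g r := (by positivity : 0 ≤ c * r ^ k).trans (hlower r hr)
  have hMr : M * r ^ k ≤ M / c * g r :=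
    calc M * r ^ k = M / c * (c * r ^ k) := by field_simp
      _ ≤ M / c * g r := by gcongr; exact hlower r hr
  have hterm : ∀ j ∈ Finset.Icc 1 (k - 1),
      |iteratedDeriv j g 0| * r ^ j / j ! ≤ landauConst k * (1 + M / c) * g r := fun j hj =>
    calc |iteratedDeriv j g 0| * r ^ j / j ! ≤ |iteratedDeriv j g 0| * r ^ j :=
          div_le_self (by positivity) (Nat.one_le_cast.2 j.factorial_pos)
      _ ≤ landauConst k * (g r + M * r ^ k) :=
          abs_iteratedDeriv_zero_mul_pow_le hg hmono hg0 hM ⟨hr0, hr.2⟩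
            (by simp only [Finset.mem_Icc] at hj; omega)
      _ ≤ landauConst k * (g r + M / c * g r) := by gcongr
      _ = landauConst k * (1 + M / c) * g r := by ring
  have hsum := Finset.sum_le_card_nsmul _ _ _ hterm
  rw [Nat.card_Icc, nsmul_eq_mul] at hsum
  have hcard : ((k - 1 + 1 - 1 : ℕ) : ℝ) ≤ k := by exact_mod_cast (by omega)
  rw [derivMajorant]
  nlinarith [mul_le_mul_of_nonneg_right hcard
      (by positivity : 0 ≤ landauConst k * (1 + M / c) * g r),
    mul_le_mul_of_nonneg_left hMr (by positivity : (0 : ℝ) ≤ k + 1)]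

end MonotoneDeriv

theorem stmt_1_general (k : ℕ) (m M : ℝ) (hm : 0 < m) (hM : 0 < M) :
    ∃ c C : ℝ, 0 < c ∧ 0 < C ∧
      ∀ f : ℝ → ℝ, ContDiff ℝ (2 * k + 5 : ℕ) f →
        ConvexOn ℝ (Set.Icc (0 : ℝ) 1) f →
        f 0 = 0 → deriv f 0 = 0 →
        (∀ r ∈ Set.Icc (0 : ℝ) 1,
          m ≤ ∑ j ∈ Finset.Icc 2 k, |iteratedDeriv j f r| / (Nat.factorial j)) →
        (∀ r ∈ Set.Icc (0 : ℝ) 1, ∀ j ≤ 2 * k + 5,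
          |iteratedDeriv j f r| ≤ M) →
        ∀ r ∈ Set.Icc (0 : ℝ) 1,
          c * (∑ j ∈ Finset.Icc 1 (k - 1), |iteratedDeriv (j + 1) f 0| * r ^ j / (Nat.factorial j)
                + M * (k + 1) * r ^ k) ≤ deriv f r ∧
          deriv f r ≤ C * (∑ j ∈ Finset.Icc 1 (k - 1), |iteratedDeriv (j + 1) f 0| * r ^ j / (Nat.factorial j)
                + M * (k + 1) * r ^ k) := by
  set K := landauConst k
  have hK : 1 ≤ K := one_le_landauConst k
  set ρ := min 1 (m / (2 * K * M))
  have hρ : ρ ∈ Ioc 0 1 := ⟨lt_min one_pos (by positivity), min_le_left _ _⟩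
  have hρM : K * M * ρ ≤ m / 2 :=
    calc K * M * ρ ≤ K * M * (m / (2 * K * M)) := by gcongr; exact min_le_right _ _
      _ = m / 2 := by field_simp
  set c := m / (2 * K) * ρ ^ k
  have hc : 0 < c := by have := hρ.1; positivity
  refine ⟨1 / (k * K * (1 + M / c) + (k + 1) * (M / c)), 1, by positivity, one_pos, ?_⟩
  intro f hf hconv _ hf'0 hm_sum hM_bound r hr
  have hg : ContDiff ℝ k (deriv f) :=
    (contDiff_succ_iff_deriv.mp (hf.of_le (by exact_mod_cast (by omega : k + 1 ≤ 2 * k + 5)))).2.2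
  have hmono : MonotoneOn (deriv f) (Icc 0 1) :=
    hconv.monotoneOn_deriv fun x _ => hf.differentiable (by simp) x
  have hMk : ∀ x ∈ Icc 0 1, |iteratedDeriv k (deriv f) x| ≤ M := fun x hx => by
    rw [← iteratedDeriv_succ']
    exact hM_bound x hx (k + 1) (by omega)
  obtain ⟨j, hj, hmj⟩ := exists_le_of_le_sum_div_factorial hm (hm_sum 0 ⟨le_rfl, zero_le_one⟩)
  rw [Finset.mem_Icc] at hj
  rw [show j = (j - 1) + 1 by omega, iteratedDeriv_succ'] at hmj
  have hlower : ∀ r ∈ Icc 0 1, c * r ^ k ≤ deriv f r := fun r hr =>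
    mul_pow_le_of_le_abs_iteratedDeriv hg hmono hf'0 hMk hρ hρM (by omega) hmj hr
  simp only [iteratedDeriv_succ']
  refine ⟨?_, ?_⟩
  · rw [one_div, inv_mul_le_iff₀ (by positivity)]
    exact derivMajorant_le hg (by omega) hmono hf'0 hMk hc hlower hr
  · rw [one_mul]
    exact le_derivMajorant hg (by omega) hf'0 hMk hr

theorem stmt_1 (k : ℕ) (hk : 2 ≤ k) (m M : ℝ) (hm : 0 < m) (hM : 0 < M) :
    ∃ c C : ℝ, 0 < c ∧ 0 < C ∧
      ∀ f : ℝ → ℝ, ContDiff ℝ (2 * k + 5 : ℕ) f →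
        ConvexOn ℝ (Set.Icc (0 : ℝ) 1) f →
        f 0 = 0 → deriv f 0 = 0 →
        (∀ r ∈ Set.Icc (0 : ℝ) 1,
          m ≤ ∑ j ∈ Finset.Icc 2 k, |iteratedDeriv j f r| / (Nat.factorial j)) →
        (∀ r ∈ Set.Icc (0 : ℝ) 1, ∀ j ≤ 2 * k + 5,
          |iteratedDeriv j f r| ≤ M) →
        ∀ r ∈ Set.Icc (0 : ℝ) 1,
          c * (∑ j ∈ Finset.Icc 1 (k - 1), |iteratedDeriv (j + 1) f 0| * r ^ j / (Nat.factorial j)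
                + M * (k + 1) * r ^ k) ≤ deriv f r ∧
          deriv f r ≤ C * (∑ j ∈ Finset.Icc 1 (k - 1), |iteratedDeriv (j + 1) f 0| * r ^ j / (Nat.factorial j)
                + M * (k + 1) * r ^ k) :=
  stmt_1_general k m M hm hM
end

section
/- Let Φ : B(0,1/2) ⊂ ℝ^d → ℝ be a convex C^{2k+5} function of finite type with Φ(0) = 0 and ∇Φ(0) = 0, satisfying along every ray through the origin the finite-type derivative conditions with constants m, M > 0 and integer k ≥ 2 (as in the one-dimensional lemma). Then there exist constants c, C > 0 depending only on k, m, M such that (c|x|)^k ≤ Φ(x) ≤ (C|x|)² for all x ∈ B(0,1/2). -/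
/-!
Restrict `Φ` to the ray through `x`: with `θ = x / ‖x‖` and `f s = Φ ((s / 2) • θ)` we have
`Φ x = f (2‖x‖)`, and convexity together with `∇Φ(0) = 0` makes `f` nondecreasing on `[0, 1)`
with `f 0 = 0`. The upper bound is Taylor's formula of order two.

For the lower bound, the coefficients of a real polynomial of degree `≤ k` are controlled by its
values on `[0, 1]` (norm equivalence via a Vandermonde matrix). Applied to the Taylor polynomial
`P` of degree `k` of `f` rescaled to `[0, s]`, the finite-type condition yields `t ∈ [0, s]` with
`|P t| ≳ s ^ k`, which beats the Taylor remainder `O(s ^ (k + 1))` for small `s`. Since `f ≥ 0`,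
`P t` must be positive, so `f s ≥ f t ≳ s ^ k`; monotonicity handles `s` beyond the small scale.
-/

open Set Function
open scoped Nat

theorem exists_mul_sum_abs_le_abs_sum_mul_pow (n : ℕ) :
    ∃ c > 0, ∀ a : Fin (n + 1) → ℝ,
      ∃ u ∈ Icc (0 : ℝ) 1, c * ∑ j, |a j| ≤ |∑ j, a j * u ^ (j : ℕ)| := by
  set v : Fin (n + 1) → ℝ := fun i ↦ i / (n + 1)
  have hv : Injective v := fun i j hij ↦
    Fin.ext <| by exact_mod_cast (div_left_inj' (by positivity : (n : ℝ) + 1 ≠ 0)).mp hij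
  set A := Matrix.vandermonde v
  have hA : Injective A.mulVecLin := Matrix.mulVec_injective_iff_isUnit.mpr <|
    (Matrix.isUnit_iff_isUnit_det A).mpr (Matrix.det_vandermonde_ne_zero_iff.mpr hv).isUnit
  obtain ⟨c, hc, hcA⟩ := antilipschitzWith_iff_exists_mul_le_norm.mp <|
    (A.mulVecLin.injective_iff_antilipschitz.mp hA).imp fun _ ↦ And.right
  refine ⟨c / (n + 1), by positivity, fun a ↦ ?_⟩
  obtain ⟨i, hi⟩ := Finite.exists_max fun i ↦ |A.mulVec a i|
  have hvi : v i ∈ Icc (0 : ℝ) 1 :=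
    ⟨by positivity, div_le_one_of_le₀ (by exact_mod_cast i.is_lt.le) (by positivity)⟩
  refine ⟨v i, hvi, ?_⟩
  have hsum : ∑ j, |a j| ≤ (n + 1) * ‖a‖ := by
    simpa using Finset.sum_le_card_nsmul Finset.univ (fun j ↦ |a j|) ‖a‖
      fun j _ ↦ by simpa using norm_le_pi_norm a j
  have hmax : ‖A.mulVec a‖ ≤ |A.mulVec a i| := (pi_norm_le_iff_of_nonempty _).mpr hi
  have heval : A.mulVec a i = ∑ j, a j * v i ^ (j : ℕ) := by
    simp [A, Matrix.mulVec, dotProduct, mul_comm]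
  calc c / (n + 1) * ∑ j, |a j| ≤ c / (n + 1) * ((n + 1) * ‖a‖) := by gcongr
    _ = c * ‖a‖ := by field_simp
    _ ≤ ‖A.mulVec a‖ := hcA a
    _ ≤ |∑ j, a j * v i ^ (j : ℕ)| := heval ▸ hmax

theorem ConvexOn.monotoneOn_of_hasDerivAt_zero {S : Set ℝ} {f : ℝ → ℝ} {x₀ : ℝ}
    (hf : ConvexOn ℝ S f) (hx₀ : x₀ ∈ S) (hd : HasDerivAt f 0 x₀) :
    MonotoneOn f (S ∩ Ici x₀) := by
  have hslope : ∀ y ∈ S, x₀ < y → 0 ≤ (f y - f x₀) / (y - x₀) := fun y hy hxy ↦ by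
    simpa only [slope_def_field] using hf.le_slope_of_hasDerivAt hx₀ hy hxy hd
  rintro s ⟨hs, hxs⟩ t ⟨ht, -⟩ hst
  obtain rfl | hst := hst.eq_or_lt
  · rfl
  have hst' : 0 ≤ (f t - f s) / (t - s) := by
    obtain rfl | hxs := (show x₀ ≤ s from hxs).eq_or_lt
    · exact hslope t ht hst
    · exact (hslope s hs hxs).trans (hf.slope_mono_adjacent hx₀ ht hxs hst)
  linarith [(le_div_iff₀ (sub_pos.mpr hst)).mp hst']

theorem abs_sub_sum_iteratedDeriv_le {f : ℝ → ℝ} {n : ℕ} {a b C x : ℝ} (hab : a < b)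
    (hf : ContDiff ℝ (n + 1) f) (hC : ∀ y ∈ Icc a b, |iteratedDeriv (n + 1) f y| ≤ C)
    (hx : x ∈ Icc a b) :
    |f x - ∑ i ∈ Finset.range (n + 1), iteratedDeriv i f a / i ! * (x - a) ^ i| ≤
      C * (x - a) ^ (n + 1) / n ! := by
  have hI := uniqueDiffOn_Icc hab
  have hderiv : ∀ i ≤ n + 1, ∀ y ∈ Icc a b,
      iteratedDerivWithin i f (Icc a b) y = iteratedDeriv i f y := fun i hi y hy ↦
    iteratedDerivWithin_eq_iteratedDeriv hI (hf.contDiffAt.of_le (by exact_mod_cast hi)) hy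
  have h := taylor_mean_remainder_bound hab.le hf.contDiffOn hx fun y hy ↦ by
    rw [hderiv _ le_rfl y hy]; exact hC y hy
  rw [taylor_within_apply, Real.norm_eq_abs] at h
  convert h using 3
  refine Finset.sum_congr rfl fun i hi ↦ ?_
  rw [hderiv i (by simp at hi; omega) a (left_mem_Icc.mpr hab.le), smul_eq_mul]
  ring

theorem mul_pow_le_sum_abs_mul_pow {k : ℕ} {m s : ℝ} {A : ℕ → ℝ} (hs₀ : 0 ≤ s) (hs₁ : s ≤ 1)
    (hm : m ≤ ∑ j ∈ Finset.Icc 2 k, |A j|) :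
    m * s ^ k ≤ ∑ j : Fin (k + 1), |A j * s ^ (j : ℕ)| := by
  rw [Fin.sum_univ_eq_sum_range (fun j ↦ |A j * s ^ j|)]
  calc m * s ^ k ≤ (∑ j ∈ Finset.Icc 2 k, |A j|) * s ^ k := by gcongr
    _ = ∑ j ∈ Finset.Icc 2 k, |A j| * s ^ k := Finset.sum_mul _ _ _
    _ ≤ ∑ j ∈ Finset.Icc 2 k, |A j * s ^ j| := Finset.sum_le_sum fun j hj ↦ by
      rw [abs_mul, abs_of_nonneg (pow_nonneg hs₀ j)]
      exact mul_le_mul_of_nonneg_left (pow_le_pow_of_le_one hs₀ hs₁ (Finset.mem_Icc.mp hj).2)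
        (abs_nonneg _)
    _ ≤ ∑ j ∈ Finset.range (k + 1), |A j * s ^ j| :=
      Finset.sum_le_sum_of_subset_of_nonneg
        (fun j hj ↦ Finset.mem_range.mpr (Nat.lt_succ_of_le (Finset.mem_Icc.mp hj).2))
        fun _ _ _ ↦ abs_nonneg _

theorem mul_pow_le_of_sum_abs_taylorCoeff_ge {f : ℝ → ℝ} {k : ℕ} {c₀ m M s : ℝ}
    (hpoly : ∀ a : Fin (k + 1) → ℝ,
      ∃ u ∈ Icc (0 : ℝ) 1, c₀ * ∑ j, |a j| ≤ |∑ j, a j * u ^ (j : ℕ)|)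
    (hc₀ : 0 ≤ c₀) (hf : ContDiff ℝ (k + 1) f) (h0 : f 0 = 0) (hmono : MonotoneOn f (Icc 0 s))
    (hsum : m ≤ ∑ j ∈ Finset.Icc 2 k, |iteratedDeriv j f 0| / j !)
    (hbd : ∀ r ∈ Icc 0 s, |iteratedDeriv (k + 1) f r| ≤ M)
    (hs₀ : 0 < s) (hs₁ : s ≤ 1) (hsmall : 2 * M * s ≤ c₀ * m) :
    c₀ * m / 2 * s ^ k ≤ f s := by
  set A : ℕ → ℝ := fun i ↦ iteratedDeriv i f 0 / (i ! : ℝ)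
  set P : ℝ → ℝ := fun t ↦ ∑ i ∈ Finset.range (k + 1), A i * t ^ i
  set ε := c₀ * m / 2 * s ^ k
  have hM : 0 ≤ M := (abs_nonneg _).trans (hbd 0 ⟨le_rfl, hs₀.le⟩)
  have hTaylor : ∀ t ∈ Icc 0 s, |f t - P t| ≤ ε := fun t ht ↦ by
    have h := abs_sub_sum_iteratedDeriv_le hs₀ hf hbd ht
    simp only [sub_zero] at h
    calc |f t - P t| ≤ M * t ^ (k + 1) / k ! := h
      _ ≤ M * s ^ (k + 1) := by
        refine (div_le_self (mul_nonneg hM (pow_nonneg ht.1 _)) (mod_cast k.factorial_pos)).trans ?_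
        exact mul_le_mul_of_nonneg_left (pow_le_pow_left₀ ht.1 ht.2 _) hM
      _ ≤ ε := by
        rw [pow_succ', ← mul_assoc]
        exact mul_le_mul_of_nonneg_right (by linarith) (pow_nonneg hs₀.le k)
  obtain ⟨u, hu, hPu⟩ := hpoly fun j ↦ A j * s ^ (j : ℕ)
  set t := s * u
  have ht : t ∈ Icc 0 s := ⟨mul_nonneg hs₀.le hu.1, mul_le_of_le_one_right hs₀.le hu.2⟩
  have hPt : 2 * ε ≤ |P t| :=
    calc 2 * ε = c₀ * (m * s ^ k) := by ring
      _ ≤ c₀ * ∑ j : Fin (k + 1), |A j * s ^ (j : ℕ)| := by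
        gcongr
        exact mul_pow_le_sum_abs_mul_pow hs₀.le hs₁ (by simpa [A, abs_div] using hsum)
      _ ≤ |∑ j : Fin (k + 1), A j * s ^ (j : ℕ) * u ^ (j : ℕ)| := hPu
      _ = |P t| := by
        rw [Fin.sum_univ_eq_sum_range (fun j ↦ A j * s ^ j * u ^ j)]
        simp only [P, t, mul_pow, mul_assoc]
  have hft : 0 ≤ f t := h0 ▸ hmono ⟨le_rfl, hs₀.le⟩ ht ht.1
  -- `f t ≥ 0` rules out `P t ≤ -2ε`, so `P t ≥ 2ε` and hence `f t ≥ ε`.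
  calc ε ≤ f t := by
        cases abs_cases (P t) <;> cases abs_le.mp (hTaylor t ht) <;> linarith
    _ ≤ f s := hmono ht ⟨hs₀.le, le_rfl⟩ ht.2

theorem exists_mul_pow_le_of_sum_abs_taylorCoeff_ge {k : ℕ} (hk : k ≠ 0) {m M : ℝ}
    (hm : 0 < m) (hM : 0 < M) :
    ∃ c > 0, ∀ f : ℝ → ℝ, ContDiff ℝ (k + 1) f → f 0 = 0 → MonotoneOn f (Ico 0 1) →
      m ≤ ∑ j ∈ Finset.Icc 2 k, |iteratedDeriv j f 0| / j ! →
      (∀ r ∈ Icc 0 1, |iteratedDeriv (k + 1) f r| ≤ M) →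
      ∀ s ∈ Ioo 0 1, (c * s) ^ k ≤ f s := by
  obtain ⟨c₀, hc₀, hpoly⟩ := exists_mul_sum_abs_le_abs_sum_mul_pow k
  set c₁ := c₀ * m / 2
  have hc₁ : 0 < c₁ := by positivity
  set δ := min (1 / 2) (c₀ * m / (2 * M))
  have hδ₀ : 0 < δ := by positivity
  have hδ₁ : δ < 1 := (min_le_left _ _).trans_lt (by norm_num)
  refine ⟨min c₁ 1 * δ, by positivity, fun f hf h0 hmono hsum hbd s hs ↦ ?_⟩
  -- below scale `δ` the Taylor polynomial dominates the remainder; above it use monotonicity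
  set σ := min s δ
  have hσ₀ : 0 < σ := lt_min hs.1 hδ₀
  have hσ₁ : σ < 1 := (min_le_right _ _).trans_lt hδ₁
  have hσsmall : 2 * M * σ ≤ c₀ * m := by
    have := (le_div_iff₀ (by positivity)).mp ((min_le_right s δ).trans (min_le_right _ _))
    linarith
  have hσ := mul_pow_le_of_sum_abs_taylorCoeff_ge hpoly hc₀.le hf h0
    (hmono.mono fun r hr ↦ ⟨hr.1, hr.2.trans_lt hσ₁⟩) hsum
    (fun r hr ↦ hbd r ⟨hr.1, hr.2.trans hσ₁.le⟩) hσ₀ hσ₁.le hσsmall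
  have hδs : δ * s ≤ σ :=
    le_min (mul_le_of_le_one_left hs.1.le hδ₁.le) (mul_le_of_le_one_right hδ₀.le hs.2.le)
  calc (min c₁ 1 * δ * s) ^ k = (min c₁ 1) ^ k * (δ * s) ^ k := by ring
    _ ≤ c₁ * σ ^ k :=
      mul_le_mul ((pow_le_of_le_one (le_min hc₁.le zero_le_one) (min_le_right _ _) hk).trans
        (min_le_left _ _)) (pow_le_pow_left₀ (mul_pos hδ₀ hs.1).le hδs k)
        (pow_nonneg (mul_pos hδ₀ hs.1).le k) hc₁.le
    _ ≤ f σ := hσ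
    _ ≤ f s := hmono ⟨hσ₀.le, hσ₁⟩ ⟨hs.1.le, hs.2⟩ (min_le_left _ _)

theorem le_mul_sq_of_abs_iteratedDeriv_two_le {f : ℝ → ℝ} {M s : ℝ} (hf : ContDiff ℝ 2 f)
    (h0 : f 0 = 0) (hd : deriv f 0 = 0) (hs : 0 < s)
    (hbd : ∀ r ∈ Icc 0 s, |iteratedDeriv 2 f r| ≤ M) :
    f s ≤ M * s ^ 2 := by
  have h := abs_sub_sum_iteratedDeriv_le (n := 1) hs hf hbd (right_mem_Icc.mpr hs.le)
  simp [Finset.sum_range_succ, h0, hd] at h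
  linarith [le_abs_self (f s)]

theorem hasDerivAt_comp_of_gradient_eq_zero {E : Type*} [NormedAddCommGroup E]
    [InnerProductSpace ℝ E] [CompleteSpace E] {Φ : E → ℝ} {γ : ℝ → E} {x v : E} {t : ℝ}
    (hΦ : DifferentiableAt ℝ Φ x) (hgrad : gradient Φ x = 0) (hγ : HasDerivAt γ v t)
    (hγt : γ t = x) :
    HasDerivAt (Φ ∘ γ) 0 t := by
  have hΦ' := hΦ.hasGradientAt.hasFDerivAt
  rw [hgrad, map_zero, ← hγt] at hΦ'
  simpa using hΦ'.comp_hasDerivAt t hγ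

theorem monotoneOn_Ico_comp_half_smul {E : Type*} [SeminormedAddCommGroup E] [NormedSpace ℝ E]
    {Φ : E → ℝ} (hconv : ConvexOn ℝ (Metric.ball 0 (1 / 2)) Φ) {θ : E} (hθ : ‖θ‖ = 1)
    (hd : HasDerivAt (fun s : ℝ ↦ Φ ((s / 2) • θ)) 0 0) :
    MonotoneOn (fun s : ℝ ↦ Φ ((s / 2) • θ)) (Ico 0 1) := by
  have hconv' : ConvexOn ℝ (Ioo (-1) 1) fun s : ℝ ↦ Φ ((s / 2) • θ) := by
    refine (hconv.comp_linearMap (LinearMap.toSpanSingleton ℝ _ ((1 / 2 : ℝ) • θ))).subset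
      (fun s hs ↦ ?_) (convex_Ioo _ _) |>.congr fun s _ ↦ ?_
    · simp only [mem_preimage, LinearMap.toSpanSingleton_apply, mem_ball_zero_iff, norm_smul, hθ]
      norm_num
      exact abs_lt.mpr hs
    · simp only [comp_apply, LinearMap.toSpanSingleton_apply, smul_smul]
      ring_nf
  exact (hconv'.monotoneOn_of_hasDerivAt_zero (by norm_num) hd).mono
    fun s hs ↦ ⟨⟨by linarith [hs.1], hs.2⟩, hs.1⟩

theorem stmt_4 (d k : ℕ) (hk : 2 ≤ k) (m M : ℝ) (hm : 0 < m) (hM : 0 < M) :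
    ∃ c C : ℝ, 0 < c ∧ 0 < C ∧
      ∀ Φ : EuclideanSpace ℝ (Fin d) → ℝ,
        ContDiff ℝ (2 * k + 5 : ℕ) Φ →
        ConvexOn ℝ (Metric.ball 0 (1/2)) Φ →
        Φ 0 = 0 → gradient Φ 0 = 0 →
        (∀ θ : EuclideanSpace ℝ (Fin d), ‖θ‖ = 1 →
          ∀ r ∈ Set.Icc (0 : ℝ) 1,
            m ≤ ∑ j ∈ Finset.Icc 2 k,
                |iteratedDeriv j (fun s : ℝ => Φ ((s / 2) • θ)) r| / (Nat.factorial j) ∧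
            ∀ j ≤ 2 * k + 5, |iteratedDeriv j (fun s : ℝ => Φ ((s / 2) • θ)) r| ≤ M) →
        ∀ x ∈ Metric.ball (0 : EuclideanSpace ℝ (Fin d)) (1/2),
          (c * ‖x‖) ^ k ≤ Φ x ∧ Φ x ≤ (C * ‖x‖) ^ 2 := by
  obtain ⟨c, hc, hlower⟩ := exists_mul_pow_le_of_sum_abs_taylorCoeff_ge (by omega : k ≠ 0) hm hM
  refine ⟨2 * c, 2 * √M, by positivity, by positivity, fun Φ hΦ hconv hΦ0 hgrad hray x hx ↦ ?_⟩
  obtain rfl | hx0 := eq_or_ne x 0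
  · simp [hΦ0, zero_pow (by omega : k ≠ 0)]
  set θ := ‖x‖⁻¹ • x
  have hθ : ‖θ‖ = 1 := norm_smul_inv_norm hx0
  set f : ℝ → ℝ := fun s ↦ Φ ((s / 2) • θ)
  have hf : ContDiff ℝ (2 * k + 5 : ℕ) f := hΦ.comp (by fun_prop)
  have hf0 : f 0 = 0 := by simp [f, hΦ0]
  have hfd : HasDerivAt f 0 0 := hasDerivAt_comp_of_gradient_eq_zero
    (hΦ.differentiable (by simp)).differentiableAt hgrad
    (((hasDerivAt_id 0).div_const 2).smul_const θ) (by simp)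
  have hmono : MonotoneOn f (Ico 0 1) := monotoneOn_Ico_comp_half_smul hconv hθ hfd
  have hs : 2 * ‖x‖ ∈ Ioo 0 1 := ⟨by positivity, by linarith [mem_ball_zero_iff.mp hx]⟩
  have hfx : f (2 * ‖x‖) = Φ x := by simp [f, θ, smul_smul, hx0]
  rw [← hfx]
  constructor
  · calc (2 * c * ‖x‖) ^ k = (c * (2 * ‖x‖)) ^ k := by ring
      _ ≤ f (2 * ‖x‖) := hlower f (hf.of_le (by norm_cast; omega)) hf0 hmono
          (hray θ hθ 0 ⟨le_rfl, zero_le_one⟩).1 (fun r hr ↦ (hray θ hθ r hr).2 _ (by omega)) _ hs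
  · calc f (2 * ‖x‖) ≤ M * (2 * ‖x‖) ^ 2 := le_mul_sq_of_abs_iteratedDeriv_two_le
          (hf.of_le (by norm_cast; omega)) hf0 hfd.deriv hs.1
          fun r hr ↦ (hray θ hθ r ⟨hr.1, hr.2.trans hs.2.le⟩).2 2 (by omega)
      _ = (2 * √M * ‖x‖) ^ 2 := by rw [mul_pow, mul_pow, mul_pow, Real.sq_sqrt hM.le]; ring
end

section
/- (John's lemma) Let Ω ⊂ ℝ^d be a compact convex set with nonempty interior. Then there exists an invertible affine transformation T : ℝ^d → ℝ^d such that B(0,1) ⊆ T^{-1}(Ω) ⊆ B(0,d). -/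
/-!
The affine images `c + A '' closedBall 0 1` contained in `Ω` form a compact family; take one
maximising `|det A|`, which is nonzero since `Ω` has interior points. After this affine change of
variables the unit ball is an ellipsoid of maximal volume in the convex body `K = T⁻¹ Ω`. If `K`
contained a point `z` with `s = ‖z‖ > n = dim E`, the convex hull of the ball and `z` would contain
the ellipsoid with semi-axis `1 + ε (s - 1) / 2` along `z` and `√(1 - ε)` orthogonally to it,
shifted by `ε (s - 1) / 2` towards `z`; by Bernoulli's inequality its volume
`(1 + ε (s - 1) / 2) (1 - ε) ^ ((n - 1) / 2)` exceeds `1` for small `ε > 0`.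
-/

open Metric InnerProductSpace Module

lemma one_lt_sq_mul_one_sub_pow {n : ℕ} {s ε : ℝ} (hs : 1 < s) (hε0 : 0 < ε) (hε2 : ε ≤ 2)
    (h : n * ε * (s - 1) < s - 1 - n) :
    1 < (1 + ε * (s - 1) / 2) ^ 2 * (1 - ε) ^ n := by
  have hbern : 1 - n * ε ≤ (1 - ε) ^ n := by
    simpa [sub_eq_add_neg] using one_add_mul_le_pow (show (-2 : ℝ) ≤ -ε by linarith) n
  have hnε : n * ε ≤ 1 := by nlinarith
  calc (1 : ℝ) < (1 + ε * (s - 1)) * (1 - n * ε) := by nlinarith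
    _ ≤ (1 + ε * (s - 1) / 2) ^ 2 * (1 - ε) ^ n := by
      gcongr
      nlinarith [sq_nonneg (ε * (s - 1))]

variable {E : Type*} [NormedAddCommGroup E] [InnerProductSpace ℝ E]

theorem Convex.smul_add_smul_mem_of_closedBall_subset {K : Set E} (hK : Convex ℝ K)
    (hB : closedBall 0 1 ⊆ K) {u : E} (hu : ‖u‖ = 1) {s : ℝ} (hz : s • u ∈ K)
    {ε b : ℝ} (hε0 : 0 ≤ ε) (hε1 : ε < 1) (hb : b ^ 2 = 1 - ε)
    {t : ℝ} {y : E} (hy : ⟪u, y⟫_ℝ = 0) (hty : t ^ 2 + ‖y‖ ^ 2 ≤ 1) :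
    (t + ε * (s - 1) * (t + 1) / 2) • u + b • y ∈ K := by
  obtain ⟨ht₀, ht₁⟩ := abs_le.mp <| (sq_le_one_iff_abs_le_one t).mp (by nlinarith [sq_nonneg ‖y‖])
  obtain ⟨l, hl⟩ : ∃ l, l = ε * (t + 1) / 2 := ⟨_, rfl⟩
  have hl₀ : 0 ≤ l := by rw [hl]; nlinarith
  have hl₁ : l < 1 := by rw [hl]; nlinarith
  -- the point is `l • (s • u) + (1 - l) • m` for some `m` in the unit ball
  have hm : ‖(t - l) • u + b • y‖ ≤ 1 - l := by
    have hperp : ⟪(t - l) • u, b • y⟫_ℝ = 0 := by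
      rw [real_inner_smul_left, real_inner_smul_right, hy]; ring
    refine abs_le_of_sq_le_sq' ?_ (by linarith) |>.2
    rw [norm_add_sq_real, hperp, norm_smul, norm_smul, hu, Real.norm_eq_abs, Real.norm_eq_abs,
      mul_pow, mul_pow, sq_abs, sq_abs, hb]
    have : (1 - ε) * ‖y‖ ^ 2 ≤ (1 - ε) * (1 - t ^ 2) := by gcongr; linarith
    have : (t - l) ^ 2 + (1 - ε) * (1 - t ^ 2) = (1 - l) ^ 2 := by rw [hl]; ring
    nlinarith
  have hmK : (1 - l)⁻¹ • ((t - l) • u + b • y) ∈ K := by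
    apply hB
    rw [mem_closedBall_zero_iff, norm_smul, norm_inv, Real.norm_eq_abs, abs_of_pos (by linarith)]
    exact inv_mul_le_one_of_le₀ hm (by linarith)
  convert hK hz hmK (a := l) (b := 1 - l) hl₀ (by linarith) (by ring) using 1
  rw [smul_inv_smul₀ (by linarith), smul_smul, hl]
  module

/-- For a unit vector `u`: multiplication by `a` on `ℝ ∙ u` and by `b` on its orthogonal
complement. -/
noncomputable def stretch (u : E) (a b : ℝ) : E →ₗ[ℝ] E :=
  b • LinearMap.id + (a - b) • (innerₛₗ ℝ u).smulRight u

theorem stretch_apply (u : E) (a b : ℝ) (x : E) :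
    stretch u a b x = b • x + ((a - b) * ⟪u, x⟫_ℝ) • u := by
  simp [stretch, mul_smul]

theorem det_stretch [FiniteDimensional ℝ E] {u : E} (hu : ‖u‖ = 1) (a : ℝ) {b : ℝ} (hb : b ≠ 0) :
    LinearMap.det (stretch u a b) = a * b ^ (finrank ℝ E - 1) := by
  have : Nontrivial E := nontrivial_of_ne u 0 (by simp [← norm_ne_zero_iff, hu])
  have h : stretch u a b = b • LinearMap.transvection (innerₛₗ ℝ u) ((a / b - 1) • u) := by
    ext x
    rw [stretch_apply, LinearMap.smul_apply, LinearMap.transvection.apply, innerₛₗ_apply_apply,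
      smul_add, smul_smul, smul_smul]
    congr 2
    field_simp
  obtain ⟨n, hn⟩ := Nat.exists_eq_add_one_of_ne_zero (finrank_pos (R := ℝ) (M := E)).ne'
  rw [h, LinearMap.det_smul, LinearMap.transvection.det, innerₛₗ_apply_apply,
    real_inner_smul_right, real_inner_self_eq_norm_sq, hu, hn, Nat.add_sub_cancel, pow_succ]
  field_simp
  ring

/-- `(A, c)` stands for the possibly degenerate ellipsoid `c + A '' closedBall 0 1`. -/
def inscribedEllipsoids (Ω : Set E) : Set ((E →L[ℝ] E) × E) :=
  {p | ∀ x ∈ closedBall (0 : E) 1, p.1 x + p.2 ∈ Ω}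

theorem isClosed_inscribedEllipsoids {Ω : Set E} (hΩ : IsClosed Ω) :
    IsClosed (inscribedEllipsoids Ω) := by
  simp only [inscribedEllipsoids, Set.ofPred_forall]
  exact isClosed_biInter fun x _ => hΩ.preimage (by fun_prop)

theorem isBounded_inscribedEllipsoids {Ω : Set E} (hΩ : Bornology.IsBounded Ω) :
    Bornology.IsBounded (inscribedEllipsoids Ω) := by
  obtain ⟨R, hR⟩ := hΩ.subset_closedBall 0
  refine (isBounded_closedBall (x := 0) (r := 2 * R)).subset fun p hp => ?_
  have hnorm : ∀ x ∈ closedBall (0 : E) 1, ‖p.1 x + p.2‖ ≤ R := fun x hx =>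
    mem_closedBall_zero_iff.mp (hR (hp x hx))
  have hc : ‖p.2‖ ≤ R := by simpa using hnorm 0 (by simp)
  have hA : ‖p.1‖ ≤ 2 * R := by
    refine ContinuousLinearMap.opNorm_le_of_unit_norm (by linarith [norm_nonneg p.2]) fun x hx => ?_
    calc ‖p.1 x‖ = ‖(p.1 x + p.2) - p.2‖ := by rw [add_sub_cancel_right]
      _ ≤ ‖p.1 x + p.2‖ + ‖p.2‖ := norm_sub_le _ _
      _ ≤ 2 * R := by linarith [hnorm x (by simp [hx])]
  rw [mem_closedBall_zero_iff, Prod.norm_def]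
  exact max_le hA (by linarith [norm_nonneg p.2])

theorem IsCompact.exists_inscribedEllipsoid_isMaxOn_abs_det [FiniteDimensional ℝ E] {Ω : Set E}
    (hΩ : IsCompact Ω) (hint : (interior Ω).Nonempty) :
    ∃ p ∈ inscribedEllipsoids Ω, p.1.det ≠ 0 ∧
      ∀ q ∈ inscribedEllipsoids Ω, |q.1.det| ≤ |p.1.det| := by
  obtain ⟨x₀, hx₀⟩ := hint
  obtain ⟨r, hr, hball⟩ := nhds_basis_closedBall.mem_iff.mp (mem_interior_iff_mem_nhds.mp hx₀)
  have hr_mem : (r • (1 : E →L[ℝ] E), x₀) ∈ inscribedEllipsoids Ω := fun x hx => hball <| by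
    rw [mem_closedBall, dist_eq_norm]
    simpa [norm_smul, abs_of_pos hr] using
      mul_le_of_le_one_right hr.le (mem_closedBall_zero_iff.mp hx)
  have hcompact : IsCompact (inscribedEllipsoids Ω) := isCompact_of_isClosed_isBounded
    (isClosed_inscribedEllipsoids hΩ.isClosed) (isBounded_inscribedEllipsoids hΩ.isBounded)
  obtain ⟨p, hp, hmax⟩ := hcompact.exists_isMaxOn ⟨_, hr_mem⟩
    (ContinuousLinearMap.continuous_det.comp continuous_fst).abs.continuousOn
  refine ⟨p, hp, fun h => ?_, fun q hq => hmax hq⟩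
  simpa [h, ContinuousLinearMap.det, LinearMap.det_smul, hr.ne'] using hmax hr_mem

theorem Convex.stretch_add_smul_mem_of_closedBall_subset {K : Set E} (hK : Convex ℝ K)
    (hB : closedBall 0 1 ⊆ K) {u : E} (hu : ‖u‖ = 1) {s : ℝ} (hz : s • u ∈ K)
    {ε b : ℝ} (hε0 : 0 ≤ ε) (hε1 : ε < 1) (hb : b ^ 2 = 1 - ε) {x : E}
    (hx : x ∈ closedBall 0 1) :
    stretch u (1 + ε * (s - 1) / 2) b x + (ε * (s - 1) / 2) • u ∈ K := by
  set t := ⟪u, x⟫_ℝ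
  have hy : ⟪u, x - t • u⟫_ℝ = 0 := by
    rw [inner_sub_right, real_inner_smul_right, real_inner_self_eq_norm_sq, hu]; ring
  have hty : t ^ 2 + ‖x - t • u‖ ^ 2 ≤ 1 := by
    have hperp : ⟪t • u, x - t • u⟫_ℝ = 0 := by rw [real_inner_smul_left, hy, mul_zero]
    have := norm_add_sq_eq_norm_sq_add_norm_sq_real hperp
    rw [add_sub_cancel, norm_smul, hu, Real.norm_eq_abs, mul_one] at this
    nlinarith [mem_closedBall_zero_iff.mp hx, norm_nonneg x, sq_abs t]
  convert hK.smul_add_smul_mem_of_closedBall_subset hB hu hz hε0 hε1 hb hy hty using 1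
  rw [stretch_apply]
  module

theorem Convex.exists_inscribedEllipsoid_one_lt_abs_det [FiniteDimensional ℝ E] {K : Set E}
    (hK : Convex ℝ K) (hB : closedBall 0 1 ⊆ K) {z : E} (hz : z ∈ K)
    (hzn : (finrank ℝ E : ℝ) < ‖z‖) :
    ∃ p ∈ inscribedEllipsoids K, 1 < |p.1.det| := by
  set s := ‖z‖
  set n := finrank ℝ E
  have hz0 : z ≠ 0 := norm_pos_iff.mp (lt_of_le_of_lt n.cast_nonneg hzn)
  have : Nontrivial E := nontrivial_of_ne z 0 hz0
  have hn : (1 : ℝ) ≤ n := by exact_mod_cast finrank_pos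
  have hs : 1 < s := by linarith
  set u := s⁻¹ • z
  have hu : ‖u‖ = 1 := by simp [u, norm_smul, s, hz0]
  have hzu : s • u = z := smul_inv_smul₀ (by positivity) z
  -- any `0 < ε < (s - n) / ((n - 1) * (s - 1))` with `ε < 1` would do
  set ε := (s - n) / (2 * n * (s - 1))
  have hε0 : 0 < ε := by apply div_pos <;> nlinarith
  have hε1 : ε < 1 := by rw [div_lt_one (by nlinarith)]; nlinarith
  set b := √(1 - ε)
  have hb : b ^ 2 = 1 - ε := Real.sq_sqrt (by linarith)
  have hb0 : 0 < b := Real.sqrt_pos.mpr (by linarith)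
  refine ⟨((stretch u (1 + ε * (s - 1) / 2) b).toContinuousLinearMap, (ε * (s - 1) / 2) • u),
    fun x hx => ?_, ?_⟩
  · exact hK.stretch_add_smul_mem_of_closedBall_subset hB hu (hzu ▸ hz) hε0.le hε1 hb hx
  · rw [ContinuousLinearMap.det, LinearMap.coe_toContinuousLinearMap, det_stretch hu _ hb0.ne',
      ← one_lt_sq_iff_one_lt_abs, mul_pow, ← pow_right_comm, hb]
    refine one_lt_sq_mul_one_sub_pow hs hε0 (by linarith) ?_
    have hεs : ε * (2 * n * (s - 1)) = s - n := div_mul_cancel₀ _ (by nlinarith)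
    rw [Nat.cast_pred finrank_pos]
    nlinarith

theorem IsCompact.exists_affineEquiv_closedBall_subset_preimage_subset [FiniteDimensional ℝ E]
    {Ω : Set E} (hcomp : IsCompact Ω) (hconv : Convex ℝ Ω) (hint : (interior Ω).Nonempty) :
    ∃ T : E ≃ᵃ[ℝ] E, closedBall 0 1 ⊆ T ⁻¹' Ω ∧ T ⁻¹' Ω ⊆ closedBall 0 (finrank ℝ E) := by
  obtain ⟨⟨A, c⟩, hAc, hdet, hmax⟩ := hcomp.exists_inscribedEllipsoid_isMaxOn_abs_det hint
  let T : E ≃ᵃ[ℝ] E := (A.toContinuousLinearEquivOfDetNeZero hdet).toLinearEquiv.toAffineEquiv.trans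
    (AffineEquiv.constVAdd ℝ E c)
  have hT : ∀ x, T x = A x + c := fun x => add_comm _ _
  have hball : closedBall 0 1 ⊆ T ⁻¹' Ω := fun x hx => by simpa [hT] using hAc x hx
  refine ⟨T, hball, fun z hz => ?_⟩
  by_contra hzn
  rw [mem_closedBall_zero_iff, not_le] at hzn
  obtain ⟨⟨N, w⟩, hNw, hdetN⟩ :=
    (hconv.affine_preimage T.toAffineMap).exists_inscribedEllipsoid_one_lt_abs_det hball hz hzn
  have hAN : (A ∘L N, A w + c) ∈ inscribedEllipsoids Ω := fun x hx => by
    simpa [hT, add_assoc] using hNw x hx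
  have hdet_comp : (A ∘L N).det = A.det * N.det := LinearMap.det_comp (A : E →ₗ[ℝ] E) N
  have hle := hmax _ hAN
  rw [hdet_comp, abs_mul] at hle
  exact hle.not_gt (lt_mul_of_one_lt_right (abs_pos.mpr hdet) hdetN)

theorem stmt_5_general (d : ℕ) (Ω : Set (EuclideanSpace ℝ (Fin d)))
    (hcomp : IsCompact Ω) (hconv : Convex ℝ Ω) (hint : (interior Ω).Nonempty) :
    ∃ T : EuclideanSpace ℝ (Fin d) ≃ᵃ[ℝ] EuclideanSpace ℝ (Fin d),
      Metric.closedBall 0 1 ⊆ ⇑T ⁻¹' Ω ∧ ⇑T ⁻¹' Ω ⊆ Metric.closedBall 0 d := by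
  simpa using hcomp.exists_affineEquiv_closedBall_subset_preimage_subset hconv hint

theorem stmt_5 (d : ℕ) (hd : 0 < d) (Ω : Set (EuclideanSpace ℝ (Fin d)))
    (hcomp : IsCompact Ω) (hconv : Convex ℝ Ω) (hint : (interior Ω).Nonempty) :
    ∃ T : EuclideanSpace ℝ (Fin d) ≃ᵃ[ℝ] EuclideanSpace ℝ (Fin d),
      Metric.closedBall 0 1 ⊆ ⇑T ⁻¹' Ω ∧ ⇑T ⁻¹' Ω ⊆ Metric.closedBall 0 d :=
  stmt_5_general d Ω hcomp hconv hint
end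

section
/- (Glaeser-type inequality) Let f : U → ℝ be a nonnegative C² function on an open set U ⊂ ℝ^d, and suppose |∂_j f| ≤ M and |∂_j² f| ≤ M on U for some M > 0 and a fixed index j. Then for every x ∈ U at distance at least 1 from the complement of U, (∂_j f(x))² ≤ 2M f(x). -/
/-!
Restrict `f` to the segment from `x` to `x + r • e_j`. Along it the second derivative is at most
`M r²`, so Taylor's bound together with `f ≥ 0` gives `0 ≤ f x + r ∂_j f x + M r² / 2` for every
`|r| ≤ 1`. Since `|∂_j f x| ≤ M`, the minimiser `r = -∂_j f x / M` of this quadratic is admissible,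
and its value is `f x - (∂_j f x)² / (2M)`.
-/

open Set

theorem image_le_taylor_quadratic_of_hasDerivAt {g g' g'' : ℝ → ℝ} {a b K : ℝ}
    (hg : ∀ t ∈ Icc a b, HasDerivAt g (g' t) t) (hg' : ∀ t ∈ Icc a b, HasDerivAt g' (g'' t) t)
    (hK : ∀ t ∈ Icc a b, g'' t ≤ K) :
    ∀ t ∈ Icc a b, g t ≤ g a + g' a * (t - a) + K * (t - a) ^ 2 / 2 := by
  have hlin (t : ℝ) : HasDerivAt (fun s => g' a + K * (s - a)) K t := by
    simpa using ((hasDerivAt_id t).sub_const a).const_mul K |>.const_add (g' a)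
  have hquad (t : ℝ) :
      HasDerivAt (fun s => g a + g' a * (s - a) + K * (s - a) ^ 2 / 2) (g' a + K * (t - a)) t := by
    have := ((((hasDerivAt_id t).sub_const a).const_mul (g' a)).const_add (g a)).fun_add
      ((((hasDerivAt_id t).sub_const a).fun_pow 2).const_mul K |>.div_const 2)
    exact this.congr_deriv (by simp only [id]; ring)
  have hg'_le : ∀ t ∈ Icc a b, g' t ≤ g' a + K * (t - a) :=
    image_le_of_deriv_right_le_deriv_boundary
      (fun t ht => (hg' t ht).continuousAt.continuousWithinAt)
      (fun t ht => (hg' t (Ico_subset_Icc_self ht)).hasDerivWithinAt) (by simp)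
      (fun t _ => (hlin t).continuousAt.continuousWithinAt) (fun t _ => (hlin t).hasDerivWithinAt)
      (fun t ht => hK t (Ico_subset_Icc_self ht))
  exact image_le_of_deriv_right_le_deriv_boundary
    (fun t ht => (hg t ht).continuousAt.continuousWithinAt)
    (fun t ht => (hg t (Ico_subset_Icc_self ht)).hasDerivWithinAt) (by simp)
    (fun t _ => (hquad t).continuousAt.continuousWithinAt) (fun t _ => (hquad t).hasDerivWithinAt)
    (fun t ht => hg'_le t (Ico_subset_Icc_self ht))

section Directional

variable {E F : Type*} [NormedAddCommGroup E] [NormedSpace ℝ E]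
  [NormedAddCommGroup F] [NormedSpace ℝ F]

theorem DifferentiableAt.hasDerivAt_comp_add_smul {φ : E → F} {x v : E} {t : ℝ}
    (h : DifferentiableAt ℝ φ (x + t • v)) :
    HasDerivAt (fun s : ℝ => φ (x + s • v)) (fderiv ℝ φ (x + t • v) v) t := by
  simpa [Function.comp_def] using
    h.hasFDerivAt.comp_hasDerivAt t (((hasDerivAt_id t).smul_const v).const_add x)

theorem fderiv_fderiv_apply_smul (f : E → F) (r : ℝ) (v z : E) :
    fderiv ℝ (fun y => fderiv ℝ f y (r • v)) z (r • v) =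
      r ^ 2 • fderiv ℝ (fun y => fderiv ℝ f y v) z v := by
  have : (fun y => fderiv ℝ f y (r • v)) = r • fun y => fderiv ℝ f y v := by
    ext1 y; simp
  rw [this, fderiv_const_smul_field]
  simp [smul_smul, sq]

theorem le_add_fderiv_add_of_fderiv_fderiv_apply_le {U : Set E} (hU : IsOpen U) {f : E → ℝ}
    (hf : ContDiffOn ℝ 2 f U) {x v : E} (hseg : ∀ t ∈ Icc (0 : ℝ) 1, x + t • v ∈ U) {K : ℝ}
    (hK : ∀ t ∈ Icc (0 : ℝ) 1, fderiv ℝ (fun y => fderiv ℝ f y v) (x + t • v) v ≤ K) :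
    f (x + v) ≤ f x + fderiv ℝ f x v + K / 2 := by
  have hf2 (z : E) (hz : z ∈ U) : ContDiffAt ℝ 2 f z := hf.contDiffAt (hU.mem_nhds hz)
  have hdiff (z : E) (hz : z ∈ U) : DifferentiableAt ℝ f z :=
    (hf2 z hz).differentiableAt (by norm_num)
  have hdiff' (z : E) (hz : z ∈ U) : DifferentiableAt ℝ (fun y => fderiv ℝ f y v) z :=
    (((hf2 z hz).fderiv_right (m := 1) (by norm_num)).differentiableAt (by norm_num)).clm_apply
      (differentiableAt_const v)
  have htaylor := image_le_taylor_quadratic_of_hasDerivAt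
    (fun t ht => (hdiff _ (hseg t ht)).hasDerivAt_comp_add_smul)
    (fun t ht => (hdiff' _ (hseg t ht)).hasDerivAt_comp_add_smul) hK 1 (by simp)
  simpa using htaylor

end Directional

theorem sq_le_two_mul_of_forall_quadratic_nonneg {c D M : ℝ} (hM : 0 < M) (hD : |D| ≤ M)
    (h : ∀ r, |r| ≤ 1 → 0 ≤ c + r * D + M * r ^ 2 / 2) : D ^ 2 ≤ 2 * M * c := by
  have hr : |-D / M| ≤ 1 := by
    rw [abs_div, abs_neg, abs_of_pos hM]
    exact div_le_one_of_le₀ hD hM.le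
  have key := h (-D / M) hr
  have : c + -D / M * D + M * (-D / M) ^ 2 / 2 = (2 * M * c - D ^ 2) / (2 * M) := by
    field_simp
    ring
  rw [this, le_div_iff₀ (by positivity), zero_mul] at key
  linarith

theorem stmt_9 (d : ℕ) (U : Set (EuclideanSpace ℝ (Fin d))) (hU : IsOpen U)
    (f : EuclideanSpace ℝ (Fin d) → ℝ) (hf : ContDiffOn ℝ 2 f U)
    (hnn : ∀ x ∈ U, 0 ≤ f x) (M : ℝ) (hM : 0 < M) (j : Fin d)
    (hd1 : ∀ x ∈ U, |fderiv ℝ f x (EuclideanSpace.single j (1 : ℝ))| ≤ M)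
    (hd2 : ∀ x ∈ U,
      |fderiv ℝ (fun y => fderiv ℝ f y (EuclideanSpace.single j (1 : ℝ))) x
        (EuclideanSpace.single j (1 : ℝ))| ≤ M) :
    ∀ x ∈ U, (∀ y, ‖y - x‖ ≤ 1 → y ∈ U) →
      (fderiv ℝ f x (EuclideanSpace.single j (1 : ℝ))) ^ 2 ≤ 2 * M * f x := by
  intro x hx hball
  set e : EuclideanSpace ℝ (Fin d) := EuclideanSpace.single j 1
  refine sq_le_two_mul_of_forall_quadratic_nonneg hM (hd1 x hx) fun r hr => ?_
  have hseg : ∀ t ∈ Icc (0 : ℝ) 1, x + t • r • e ∈ U := fun t ht => hball _ <| by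
    simpa [e, norm_smul, abs_of_nonneg ht.1] using mul_le_one₀ ht.2 (abs_nonneg r) hr
  have hK (t : ℝ) (ht : t ∈ Icc (0 : ℝ) 1) :
      fderiv ℝ (fun y => fderiv ℝ f y (r • e)) (x + t • r • e) (r • e) ≤ M * r ^ 2 := by
    rw [fderiv_fderiv_apply_smul, smul_eq_mul, mul_comm]
    exact mul_le_mul_of_nonneg_right ((le_abs_self _).trans (hd2 _ (hseg t ht))) (sq_nonneg r)
  calc 0 ≤ f (x + r • e) := hnn _ (by simpa using hseg 1 (right_mem_Icc.2 zero_le_one))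
    _ ≤ f x + fderiv ℝ f x (r • e) + M * r ^ 2 / 2 :=
      le_add_fderiv_add_of_fderiv_fderiv_apply_le hU hf hseg hK
    _ = f x + r * fderiv ℝ f x e + M * r ^ 2 / 2 := by rw [map_smul, smul_eq_mul]
end

section
/- Let h : ℝ → ℝ be a function definable in an o-minimal expansion of the real field. Then there exist finitely many points a₁ < a₂ < ⋯ < a_N such that on each of the open intervals (−∞, a₁), (a₁, a₂), …, (a_N, ∞), the function h is either constant, strictly increasing, or strictly decreasing (the Monotonicity Theorem). -/
open FirstOrder Set

section Toolkit
variable {L : FirstOrder.Language} [L.Structure ℝ]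

lemma dSingleton (c : ℝ) :
    Set.Definable (Set.univ : Set ℝ) L {v : Fin 1 → ℝ | v 0 = c} := by
  refine ⟨FirstOrder.Language.Term.equal (FirstOrder.Language.Term.var 0)
    ((L.con ⟨c, Set.mem_univ c⟩).term), ?_⟩
  ext v
  simp only [mem_setOf_eq, FirstOrder.Language.Formula.realize_equal,
    FirstOrder.Language.Term.realize_var, FirstOrder.Language.Term.realize_con]

lemma dEx {n : ℕ} {s : Set (Fin (n+1) → ℝ)} (hs : Set.Definable Set.univ L s) :
    Set.Definable Set.univ L {v : Fin n → ℝ | ∃ t, Fin.snoc v t ∈ s} := by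
  have him := hs.image_comp (Fin.castSucc : Fin n → Fin (n+1))
  have heq : ((fun g : Fin (n+1) → ℝ => g ∘ Fin.castSucc) '' s)
      = {v : Fin n → ℝ | ∃ t, Fin.snoc v t ∈ s} := by
    ext v
    constructor
    · rintro ⟨g, hg, rfl⟩
      refine ⟨g (Fin.last n), ?_⟩
      have : Fin.snoc (g ∘ Fin.castSucc) (g (Fin.last n)) = g := Fin.snoc_init_self g
      rw [this]; exact hg
    · rintro ⟨t, ht⟩
      exact ⟨Fin.snoc v t, ht, funext fun i => Fin.snoc_castSucc _ _ _⟩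
  rwa [heq] at him

lemma dAll {n : ℕ} {s : Set (Fin (n+1) → ℝ)} (hs : Set.Definable Set.univ L s) :
    Set.Definable Set.univ L {v : Fin n → ℝ | ∀ t, Fin.snoc v t ∈ s} := by
  have := (dEx hs.compl).compl
  have heq : ({v : Fin n → ℝ | ∃ t, Fin.snoc v t ∈ sᶜ})ᶜ
      = {v : Fin n → ℝ | ∀ t, Fin.snoc v t ∈ s} := by
    ext v; simp [not_exists]
  rwa [heq] at this

lemma dPull {m n : ℕ} {s : Set (Fin m → ℝ)} (hs : Set.Definable Set.univ L s)
    (σ : Fin m → Fin n) :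
    Set.Definable Set.univ L {v : Fin n → ℝ | v ∘ σ ∈ s} :=
  hs.preimage_comp σ

end Toolkit

section Wrap
variable {L : FirstOrder.Language} [L.Structure ℝ]
local notation "D" => Set.Definable (Set.univ : Set ℝ) L

lemma dEx1 {P : ℝ → ℝ → Prop} (hP : D {w : Fin 2 → ℝ | P (w 0) (w 1)}) :
    D {v : Fin 1 → ℝ | ∃ t, P (v 0) t} := dEx hP

lemma dEx2 {P : ℝ → ℝ → ℝ → Prop} (hP : D {w : Fin 3 → ℝ | P (w 0) (w 1) (w 2)}) :
    D {v : Fin 2 → ℝ | ∃ t, P (v 0) (v 1) t} := dEx hP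

lemma dEx3 {P : ℝ → ℝ → ℝ → ℝ → Prop} (hP : D {w : Fin 4 → ℝ | P (w 0) (w 1) (w 2) (w 3)}) :
    D {v : Fin 3 → ℝ | ∃ t, P (v 0) (v 1) (v 2) t} := dEx hP

lemma dAll2 {P : ℝ → ℝ → ℝ → Prop} (hP : D {w : Fin 3 → ℝ | P (w 0) (w 1) (w 2)}) :
    D {v : Fin 2 → ℝ | ∀ t, P (v 0) (v 1) t} := dAll hP

lemma dAll3 {P : ℝ → ℝ → ℝ → ℝ → Prop} (hP : D {w : Fin 4 → ℝ | P (w 0) (w 1) (w 2) (w 3)}) :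
    D {v : Fin 3 → ℝ | ∀ t, P (v 0) (v 1) (v 2) t} := dAll hP

lemma dAll4 {P : ℝ → ℝ → ℝ → ℝ → ℝ → Prop}
    (hP : D {w : Fin 5 → ℝ | P (w 0) (w 1) (w 2) (w 3) (w 4)}) :
    D {v : Fin 4 → ℝ | ∀ t, P (v 0) (v 1) (v 2) (v 3) t} := dAll hP

lemma dPull1 {n : ℕ} {Q : ℝ → Prop} (hQ : D {w : Fin 1 → ℝ | Q (w 0)}) (i : Fin n) :
    D {v : Fin n → ℝ | Q (v i)} := dPull hQ ![i]

lemma dPull2 {n : ℕ} {Q : ℝ → ℝ → Prop} (hQ : D {w : Fin 2 → ℝ | Q (w 0) (w 1)})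
    (i j : Fin n) : D {v : Fin n → ℝ | Q (v i) (v j)} := dPull hQ ![i, j]

lemma dInter {n : ℕ} {P Q : (Fin n → ℝ) → Prop} (hP : D {v | P v}) (hQ : D {v | Q v}) :
    D {v : Fin n → ℝ | P v ∧ Q v} := hP.inter hQ

lemma dImp {n : ℕ} {P Q : (Fin n → ℝ) → Prop} (hP : D {v | P v}) (hQ : D {v | Q v}) :
    D {v : Fin n → ℝ | P v → Q v} := by
  have := hP.compl.union hQ
  have heq : ({v : Fin n → ℝ | P v}ᶜ ∪ {v | Q v}) = {v : Fin n → ℝ | P v → Q v} := by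
    ext v; simp [imp_iff_not_or]
  rwa [heq] at this

end Wrap

/-- right-sign set: near `x` on the right, `R (f y) (f x)` holds. -/
def RtSet (f : ℝ → ℝ) (R : ℝ → ℝ → Prop) : Set ℝ :=
  {x | ∃ z, x < z ∧ ∀ y, x < y → y < z → R (f y) (f x)}

def LtSet (f : ℝ → ℝ) (R : ℝ → ℝ → Prop) : Set ℝ :=
  {x | ∃ w, w < x ∧ ∀ y, w < y → y < x → R (f y) (f x)}

def Sinc (f : ℝ → ℝ) : Set ℝ :=
  {x | ∃ u, ∃ v, u < x ∧ x < v ∧ ∀ y, ∀ z, u < y → y < z → z < v → f y < f z}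

def Sdec (f : ℝ → ℝ) : Set ℝ :=
  {x | ∃ u, ∃ v, u < x ∧ x < v ∧ ∀ y, ∀ z, u < y → y < z → z < v → f z < f y}

def Scon (f : ℝ → ℝ) : Set ℝ :=
  {x | ∃ u, ∃ v, u < x ∧ x < v ∧ ∀ y, u < y → y < v → f y = f x}

section Concrete
variable {L : FirstOrder.Language} [L.Structure ℝ]
variable (hlt : Set.Definable (Set.univ : Set ℝ) L {v : Fin 2 → ℝ | v 0 < v 1}) {h : ℝ → ℝ}
  (hdef : Set.Definable (Set.univ : Set ℝ) L {v : Fin 2 → ℝ | v 1 = h (v 0)})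

include hlt in
lemma dEqd : Set.Definable (Set.univ : Set ℝ) L {w : Fin 2 → ℝ | w 0 = w 1} := by
  have := (hlt.union (dPull2 (Q := fun a b => a < b) hlt 1 0)).compl
  have heq : ({v : Fin 2 → ℝ | v 0 < v 1} ∪ {v : Fin 2 → ℝ | v 1 < v 0})ᶜ
      = {w : Fin 2 → ℝ | w 0 = w 1} := by
    ext v
    simp only [Set.mem_compl_iff, Set.mem_union, mem_setOf_eq, not_or]
    constructor
    · rintro ⟨h1, h2⟩; exact le_antisymm (not_lt.1 h2) (not_lt.1 h1)
    · intro he; rw [he]; exact ⟨lt_irrefl _, lt_irrefl _⟩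
  rwa [heq] at this

include hlt hdef in
lemma dhRel {R : ℝ → ℝ → Prop}
    (hR : Set.Definable (Set.univ : Set ℝ) L {w : Fin 2 → ℝ | R (w 0) (w 1)}) :
    Set.Definable (Set.univ : Set ℝ) L {w : Fin 2 → ℝ | R (h (w 0)) (h (w 1))} := by
  have P4 : Set.Definable (Set.univ : Set ℝ)
      L {w : Fin 4 → ℝ | (w 2 = h (w 0) ∧ w 3 = h (w 1)) ∧ R (w 2) (w 3)} :=
    dInter (P := fun w => w 2 = h (w 0) ∧ w 3 = h (w 1)) (Q := fun w => R (w 2) (w 3))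
      (dInter (P := fun w => w 2 = h (w 0)) (Q := fun w => w 3 = h (w 1))
        (dPull2 (Q := fun a b => b = h a) hdef 0 2) (dPull2 (Q := fun a b => b = h a) hdef 1 3))
      (dPull2 (Q := R) hR 2 3)
  have S3 := dEx3 (P := fun a b c d => (c = h a ∧ d = h b) ∧ R c d) P4
  have S2 := dEx2 (P := fun a b c => ∃ d, (c = h a ∧ d = h b) ∧ R c d) S3
  have heq : {v : Fin 2 → ℝ | ∃ c, ∃ d, (c = h (v 0) ∧ d = h (v 1)) ∧ R c d}
      = {w : Fin 2 → ℝ | R (h (w 0)) (h (w 1))} := by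
    ext v
    constructor
    · rintro ⟨c, d, ⟨rfl, rfl⟩, hr⟩; exact hr
    · intro hr; exact ⟨h (v 0), h (v 1), ⟨rfl, rfl⟩, hr⟩
  rwa [heq] at S2

include hlt hdef in
lemma dRtSet {R : ℝ → ℝ → Prop}
    (hR : Set.Definable (Set.univ : Set ℝ) L {w : Fin 2 → ℝ | R (w 0) (w 1)}) :
    Set.Definable (Set.univ : Set ℝ) L {v : Fin 1 → ℝ | v 0 ∈ RtSet h R} := by
  have D3 : Set.Definable (Set.univ : Set ℝ)
      L {v : Fin 3 → ℝ | v 0 < v 2 → v 2 < v 1 → R (h (v 2)) (h (v 0))} :=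
    dImp (P := fun v => v 0 < v 2) (Q := fun v => v 2 < v 1 → R (h (v 2)) (h (v 0)))
      (dPull2 (Q := fun a b => a < b) hlt 0 2)
      (dImp (P := fun v => v 2 < v 1) (Q := fun v => R (h (v 2)) (h (v 0)))
        (dPull2 (Q := fun a b => a < b) hlt 2 1)
        (dPull2 (Q := fun a b => R (h a) (h b)) (dhRel hlt hdef hR) 2 0))
  have Q2 := dAll2 (P := fun x z y => x < y → y < z → R (h y) (h x)) D3
  have G2 : Set.Definable (Set.univ : Set ℝ)
      L {v : Fin 2 → ℝ | v 0 < v 1 ∧ ∀ y, v 0 < y → y < v 1 → R (h y) (h (v 0))} :=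
    dInter (P := fun v => v 0 < v 1)
      (Q := fun v => ∀ y, v 0 < y → y < v 1 → R (h y) (h (v 0))) hlt Q2
  exact dEx1 (P := fun x z => x < z ∧ ∀ y, x < y → y < z → R (h y) (h x)) G2

include hlt hdef in
lemma dLtSet {R : ℝ → ℝ → Prop}
    (hR : Set.Definable (Set.univ : Set ℝ) L {w : Fin 2 → ℝ | R (w 0) (w 1)}) :
    Set.Definable (Set.univ : Set ℝ) L {v : Fin 1 → ℝ | v 0 ∈ LtSet h R} := by
  have D3 : Set.Definable (Set.univ : Set ℝ)
      L {v : Fin 3 → ℝ | v 1 < v 2 → v 2 < v 0 → R (h (v 2)) (h (v 0))} :=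
    dImp (P := fun v => v 1 < v 2) (Q := fun v => v 2 < v 0 → R (h (v 2)) (h (v 0)))
      (dPull2 (Q := fun a b => a < b) hlt 1 2)
      (dImp (P := fun v => v 2 < v 0) (Q := fun v => R (h (v 2)) (h (v 0)))
        (dPull2 (Q := fun a b => a < b) hlt 2 0)
        (dPull2 (Q := fun a b => R (h a) (h b)) (dhRel hlt hdef hR) 2 0))
  have Q2 := dAll2 (P := fun x w y => w < y → y < x → R (h y) (h x)) D3
  have G2 : Set.Definable (Set.univ : Set ℝ)
      L {v : Fin 2 → ℝ | v 1 < v 0 ∧ ∀ y, v 1 < y → y < v 0 → R (h y) (h (v 0))} :=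
    dInter (P := fun v => v 1 < v 0)
      (Q := fun v => ∀ y, v 1 < y → y < v 0 → R (h y) (h (v 0)))
      (dPull2 (Q := fun a b => a < b) hlt 1 0) Q2
  exact dEx1 (P := fun x w => w < x ∧ ∀ y, w < y → y < x → R (h y) (h x)) G2

include hlt hdef in
lemma dSinc : Set.Definable (Set.univ : Set ℝ) L {v : Fin 1 → ℝ | v 0 ∈ Sinc h} := by
  have A5 : Set.Definable (Set.univ : Set ℝ)
      L {v : Fin 5 → ℝ | v 1 < v 3 → v 3 < v 4 → v 4 < v 2 → h (v 3) < h (v 4)} :=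
    dImp (P := fun v => v 1 < v 3) (Q := fun v => v 3 < v 4 → v 4 < v 2 → h (v 3) < h (v 4))
      (dPull2 (Q := fun a b => a < b) hlt 1 3)
      (dImp (P := fun v => v 3 < v 4) (Q := fun v => v 4 < v 2 → h (v 3) < h (v 4))
        (dPull2 (Q := fun a b => a < b) hlt 3 4)
        (dImp (P := fun v => v 4 < v 2) (Q := fun v => h (v 3) < h (v 4))
          (dPull2 (Q := fun a b => a < b) hlt 4 2)
          (dPull2 (Q := fun a b => h a < h b) (dhRel hlt hdef hlt) 3 4)))
  have B4 := dAll4 (P := fun x u v y z => u < y → y < z → z < v → h y < h z) A5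
  have C3 := dAll3 (P := fun x u v y => ∀ z, u < y → y < z → z < v → h y < h z) B4
  have G3 : Set.Definable (Set.univ : Set ℝ)
      L {w : Fin 3 → ℝ | w 1 < w 0 ∧ w 0 < w 2 ∧
        ∀ y, ∀ z, w 1 < y → y < z → z < w 2 → h y < h z} :=
    dInter (P := fun w => w 1 < w 0)
      (Q := fun w => w 0 < w 2 ∧ ∀ y, ∀ z, w 1 < y → y < z → z < w 2 → h y < h z)
      (dPull2 (Q := fun a b => a < b) hlt 1 0)
      (dInter (P := fun w => w 0 < w 2)
        (Q := fun w => ∀ y, ∀ z, w 1 < y → y < z → z < w 2 → h y < h z)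
        (dPull2 (Q := fun a b => a < b) hlt 0 2) C3)
  have E2 := dEx2 (P := fun x u v => u < x ∧ x < v ∧
    ∀ y, ∀ z, u < y → y < z → z < v → h y < h z) G3
  exact dEx1 (P := fun x u => ∃ v, u < x ∧ x < v ∧
    ∀ y, ∀ z, u < y → y < z → z < v → h y < h z) E2

include hlt hdef in
lemma dSdec : Set.Definable (Set.univ : Set ℝ) L {v : Fin 1 → ℝ | v 0 ∈ Sdec h} := by
  have A5 : Set.Definable (Set.univ : Set ℝ)
      L {v : Fin 5 → ℝ | v 1 < v 3 → v 3 < v 4 → v 4 < v 2 → h (v 4) < h (v 3)} :=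
    dImp (P := fun v => v 1 < v 3) (Q := fun v => v 3 < v 4 → v 4 < v 2 → h (v 4) < h (v 3))
      (dPull2 (Q := fun a b => a < b) hlt 1 3)
      (dImp (P := fun v => v 3 < v 4) (Q := fun v => v 4 < v 2 → h (v 4) < h (v 3))
        (dPull2 (Q := fun a b => a < b) hlt 3 4)
        (dImp (P := fun v => v 4 < v 2) (Q := fun v => h (v 4) < h (v 3))
          (dPull2 (Q := fun a b => a < b) hlt 4 2)
          (dPull2 (Q := fun a b => h a < h b) (dhRel hlt hdef hlt) 4 3)))
  have B4 := dAll4 (P := fun x u v y z => u < y → y < z → z < v → h z < h y) A5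
  have C3 := dAll3 (P := fun x u v y => ∀ z, u < y → y < z → z < v → h z < h y) B4
  have G3 : Set.Definable (Set.univ : Set ℝ)
      L {w : Fin 3 → ℝ | w 1 < w 0 ∧ w 0 < w 2 ∧
        ∀ y, ∀ z, w 1 < y → y < z → z < w 2 → h z < h y} :=
    dInter (P := fun w => w 1 < w 0)
      (Q := fun w => w 0 < w 2 ∧ ∀ y, ∀ z, w 1 < y → y < z → z < w 2 → h z < h y)
      (dPull2 (Q := fun a b => a < b) hlt 1 0)
      (dInter (P := fun w => w 0 < w 2)
        (Q := fun w => ∀ y, ∀ z, w 1 < y → y < z → z < w 2 → h z < h y)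
        (dPull2 (Q := fun a b => a < b) hlt 0 2) C3)
  have E2 := dEx2 (P := fun x u v => u < x ∧ x < v ∧
    ∀ y, ∀ z, u < y → y < z → z < v → h z < h y) G3
  exact dEx1 (P := fun x u => ∃ v, u < x ∧ x < v ∧
    ∀ y, ∀ z, u < y → y < z → z < v → h z < h y) E2

include hlt hdef in
lemma dScon : Set.Definable (Set.univ : Set ℝ) L {v : Fin 1 → ℝ | v 0 ∈ Scon h} := by
  have A4 : Set.Definable (Set.univ : Set ℝ)
      L {v : Fin 4 → ℝ | v 1 < v 3 → v 3 < v 2 → h (v 3) = h (v 0)} :=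
    dImp (P := fun v => v 1 < v 3) (Q := fun v => v 3 < v 2 → h (v 3) = h (v 0))
      (dPull2 (Q := fun a b => a < b) hlt 1 3)
      (dImp (P := fun v => v 3 < v 2) (Q := fun v => h (v 3) = h (v 0))
        (dPull2 (Q := fun a b => a < b) hlt 3 2)
        (dPull2 (Q := fun a b => h a = h b) (dhRel hlt hdef (dEqd hlt)) 3 0))
  have B3 := dAll3 (P := fun x u v y => u < y → y < v → h y = h x) A4
  have G3 : Set.Definable (Set.univ : Set ℝ)
      L {w : Fin 3 → ℝ | w 1 < w 0 ∧ w 0 < w 2 ∧ ∀ y, w 1 < y → y < w 2 → h y = h (w 0)} :=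
    dInter (P := fun w => w 1 < w 0)
      (Q := fun w => w 0 < w 2 ∧ ∀ y, w 1 < y → y < w 2 → h y = h (w 0))
      (dPull2 (Q := fun a b => a < b) hlt 1 0)
      (dInter (P := fun w => w 0 < w 2)
        (Q := fun w => ∀ y, w 1 < y → y < w 2 → h y = h (w 0))
        (dPull2 (Q := fun a b => a < b) hlt 0 2) B3)
  have E2 := dEx2 (P := fun x u v => u < x ∧ x < v ∧ ∀ y, u < y → y < v → h y = h x) G3
  exact dEx1 (P := fun x u => ∃ v, u < x ∧ x < v ∧ ∀ y, u < y → y < v → h y = h x) E2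

include hlt hdef in
lemma dParamRight {R : ℝ → ℝ → Prop}
    (hR : Set.Definable (Set.univ : Set ℝ) L {w : Fin 2 → ℝ | R (w 0) (w 1)}) (c : ℝ) :
    Set.Definable (Set.univ : Set ℝ) L {v : Fin 1 → ℝ | c < v 0 ∧ R (h (v 0)) (h c)} := by
  have B2 : Set.Definable (Set.univ : Set ℝ)
      L {w : Fin 2 → ℝ | (w 1 = c ∧ w 1 < w 0) ∧ R (h (w 0)) (h (w 1))} :=
    dInter (P := fun w => w 1 = c ∧ w 1 < w 0) (Q := fun w => R (h (w 0)) (h (w 1)))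
      (dInter (P := fun w => w 1 = c) (Q := fun w => w 1 < w 0)
        (dPull1 (Q := fun a => a = c) (dSingleton c) 1)
        (dPull2 (Q := fun a b => a < b) hlt 1 0))
      (dhRel hlt hdef hR)
  have T1 := dEx1 (P := fun x t => (t = c ∧ t < x) ∧ R (h x) (h t)) B2
  have heq : {v : Fin 1 → ℝ | ∃ t, (t = c ∧ t < v 0) ∧ R (h (v 0)) (h t)}
      = {v : Fin 1 → ℝ | c < v 0 ∧ R (h (v 0)) (h c)} := by
    ext v
    constructor
    · rintro ⟨t, ⟨rfl, ht⟩, hr⟩; exact ⟨ht, hr⟩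
    · rintro ⟨hc, hr⟩; exact ⟨c, ⟨rfl, hc⟩, hr⟩
  rwa [heq] at T1

include hlt hdef in
lemma dParamLeft {R : ℝ → ℝ → Prop}
    (hR : Set.Definable (Set.univ : Set ℝ) L {w : Fin 2 → ℝ | R (w 0) (w 1)}) (c : ℝ) :
    Set.Definable (Set.univ : Set ℝ) L {v : Fin 1 → ℝ | v 0 < c ∧ R (h (v 0)) (h c)} := by
  have B2 : Set.Definable (Set.univ : Set ℝ)
      L {w : Fin 2 → ℝ | (w 1 = c ∧ w 0 < w 1) ∧ R (h (w 0)) (h (w 1))} :=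
    dInter (P := fun w => w 1 = c ∧ w 0 < w 1) (Q := fun w => R (h (w 0)) (h (w 1)))
      (dInter (P := fun w => w 1 = c) (Q := fun w => w 0 < w 1)
        (dPull1 (Q := fun a => a = c) (dSingleton c) 1) hlt)
      (dhRel hlt hdef hR)
  have T1 := dEx1 (P := fun x t => (t = c ∧ x < t) ∧ R (h x) (h t)) B2
  have heq : {v : Fin 1 → ℝ | ∃ t, (t = c ∧ v 0 < t) ∧ R (h (v 0)) (h t)}
      = {v : Fin 1 → ℝ | v 0 < c ∧ R (h (v 0)) (h c)} := by
    ext v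
    constructor
    · rintro ⟨t, ⟨rfl, ht⟩, hr⟩; exact ⟨ht, hr⟩
    · rintro ⟨hc, hr⟩; exact ⟨c, ⟨rfl, hc⟩, hr⟩
  rwa [heq] at T1

end Concrete

lemma not_countable_Ioo {a b : ℝ} (hab : a < b) : ¬ (Set.Ioo a b).Countable := by
  intro hc
  have h1 := hc.le_aleph0
  rw [Cardinal.mk_Ioo_real hab] at h1
  exact absurd h1 (not_le.2 Cardinal.aleph0_lt_continuum)

/-- every nonempty open set contains a nontrivial interval around any of its points -/
lemma open_sub_Ioo {t : Set ℝ} (ht : IsOpen t) {z : ℝ} (hz : z ∈ t) :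
    ∃ c d, c < z ∧ z < d ∧ Set.Ioo c d ⊆ t := by
  obtain ⟨ε, hε, hball⟩ := Metric.isOpen_iff.1 ht z hz
  refine ⟨z - ε, z + ε, by linarith, by linarith, ?_⟩
  rw [← Real.ball_eq_Ioo]; exact hball

section Analysis

/-- shape of a piece collection produced by o-minimality -/
def Pieces (𝒞 : Finset (Set ℝ)) : Prop :=
  ∀ t ∈ 𝒞, (∃ a : ℝ, t = {a}) ∨ (IsOpen t ∧ t.OrdConnected)

lemma dichotRight {𝒞 : Finset (Set ℝ)} (hP : Pieces 𝒞) (x : ℝ) :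
    (∃ δ > 0, Set.Ioo x (x + δ) ⊆ ⋃₀ (𝒞 : Set (Set ℝ))) ∨
    (∃ δ > 0, Set.Ioo x (x + δ) ∩ ⋃₀ (𝒞 : Set (Set ℝ)) = ∅) := by
  by_cases hto : ∃ t ∈ 𝒞, IsOpen t ∧ t.OrdConnected ∧ ∀ ε > 0, (t ∩ Set.Ioo x (x + ε)).Nonempty
  · obtain ⟨t, ht𝒞, -, hoc, htouch⟩ := hto
    obtain ⟨y₀, hy₀t, hy₀i⟩ := htouch 1 one_pos
    left
    refine ⟨y₀ - x, by linarith [hy₀i.1], fun z hz => ?_⟩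
    have hzy : z < y₀ := by have := hz.2; linarith
    obtain ⟨y₁, hy₁t, hy₁i⟩ := htouch (z - x) (by linarith [hz.1])
    have hz_t : z ∈ t := by
      have : Set.Icc y₁ y₀ ⊆ t := hoc.out hy₁t hy₀t
      exact this ⟨le_of_lt (by linarith [hy₁i.2]), le_of_lt hzy⟩
    exact ⟨t, ht𝒞, hz_t⟩
  · right
    push_neg at hto
    have claim : ∀ t ∈ 𝒞, ∃ ε > 0, t ∩ Set.Ioo x (x + ε) = ∅ := by
      intro t ht
      rcases hP t ht with ⟨p, rfl⟩ | ⟨hop, hoc⟩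
      · rcases le_or_gt p x with hpx | hpx
        · refine ⟨1, one_pos, Set.eq_empty_iff_forall_notMem.2 ?_⟩
          intro z hz
          rw [Set.mem_inter_iff, Set.mem_singleton_iff, Set.mem_Ioo] at hz
          obtain ⟨rfl, h1, h2⟩ := hz; linarith
        · refine ⟨p - x, by linarith, Set.eq_empty_iff_forall_notMem.2 ?_⟩
          intro z hz
          rw [Set.mem_inter_iff, Set.mem_singleton_iff, Set.mem_Ioo] at hz
          obtain ⟨rfl, h1, h2⟩ := hz; linarith
      · exact hto t ht hop hoc
    choose! ε hεpos hεemp using claim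
    rcases Finset.eq_empty_or_nonempty 𝒞 with rfl | h𝒞
    · exact ⟨1, one_pos, by simp⟩
    · refine ⟨𝒞.inf' h𝒞 ε, ?_, ?_⟩
      · exact (Finset.lt_inf'_iff h𝒞).mpr (fun t ht => hεpos t ht)
      · ext z
        simp only [Set.mem_inter_iff, Set.mem_sUnion, Set.mem_empty_iff_false, iff_false, not_and]
        rintro hz ⟨t, ht, hzt⟩
        have hzε : z ∈ Set.Ioo x (x + ε t) := by
          refine ⟨hz.1, lt_of_lt_of_le hz.2 ?_⟩
          have := Finset.inf'_le ε ht
          linarith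
        have : z ∈ t ∩ Set.Ioo x (x + ε t) := ⟨hzt, hzε⟩
        rw [hεemp t ht] at this
        exact this

lemma dichotLeft {𝒞 : Finset (Set ℝ)} (hP : Pieces 𝒞) (x : ℝ) :
    (∃ δ > 0, Set.Ioo (x - δ) x ⊆ ⋃₀ (𝒞 : Set (Set ℝ))) ∨
    (∃ δ > 0, Set.Ioo (x - δ) x ∩ ⋃₀ (𝒞 : Set (Set ℝ)) = ∅) := by
  by_cases hto : ∃ t ∈ 𝒞, IsOpen t ∧ t.OrdConnected ∧ ∀ ε > 0, (t ∩ Set.Ioo (x - ε) x).Nonempty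
  · obtain ⟨t, ht𝒞, -, hoc, htouch⟩ := hto
    obtain ⟨y₀, hy₀t, hy₀i⟩ := htouch 1 one_pos
    left
    refine ⟨x - y₀, by linarith [hy₀i.2], fun z hz => ?_⟩
    have hzy : y₀ < z := by have := hz.1; linarith
    obtain ⟨y₁, hy₁t, hy₁i⟩ := htouch (x - z) (by linarith [hz.2])
    have hz_t : z ∈ t := by
      have : Set.Icc y₀ y₁ ⊆ t := hoc.out hy₀t hy₁t
      exact this ⟨le_of_lt hzy, le_of_lt (by linarith [hy₁i.1])⟩
    exact ⟨t, ht𝒞, hz_t⟩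
  · right
    push_neg at hto
    have claim : ∀ t ∈ 𝒞, ∃ ε > 0, t ∩ Set.Ioo (x - ε) x = ∅ := by
      intro t ht
      rcases hP t ht with ⟨p, rfl⟩ | ⟨hop, hoc⟩
      · rcases le_or_gt x p with hpx | hpx
        · refine ⟨1, one_pos, Set.eq_empty_iff_forall_notMem.2 ?_⟩
          intro z hz
          rw [Set.mem_inter_iff, Set.mem_singleton_iff, Set.mem_Ioo] at hz
          obtain ⟨rfl, h1, h2⟩ := hz; linarith
        · refine ⟨x - p, by linarith, Set.eq_empty_iff_forall_notMem.2 ?_⟩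
          intro z hz
          rw [Set.mem_inter_iff, Set.mem_singleton_iff, Set.mem_Ioo] at hz
          obtain ⟨rfl, h1, h2⟩ := hz; linarith
      · exact hto t ht hop hoc
    choose! ε hεpos hεemp using claim
    rcases Finset.eq_empty_or_nonempty 𝒞 with rfl | h𝒞
    · exact ⟨1, one_pos, by simp⟩
    · refine ⟨𝒞.inf' h𝒞 ε, ?_, ?_⟩
      · exact (Finset.lt_inf'_iff h𝒞).mpr (fun t ht => hεpos t ht)
      · ext z
        simp only [Set.mem_inter_iff, Set.mem_sUnion, Set.mem_empty_iff_false, iff_false, not_and]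
        rintro hz ⟨t, ht, hzt⟩
        have hzε : z ∈ Set.Ioo (x - ε t) x := by
          refine ⟨lt_of_le_of_lt ?_ hz.1, hz.2⟩
          have := Finset.inf'_le ε ht
          linarith
        have : z ∈ t ∩ Set.Ioo (x - ε t) x := ⟨hzt, hzε⟩
        rw [hεemp t ht] at this
        exact this

end Analysis

section Analysis2
variable {f : ℝ → ℝ}

lemma badCountable {R₁ R₂ : ℝ → ℝ → Prop} (hbad : ∀ a b : ℝ, R₁ a b → R₂ b a → False) :
    (RtSet f R₁ ∩ LtSet f R₂).Countable := by
  classical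
  set C : ℚ → ℚ → Set ℝ := fun p q =>
    {x | (p : ℝ) < x ∧ x < (q : ℝ) ∧ (∀ y, x < y → y < (q : ℝ) → R₁ (f y) (f x)) ∧
      (∀ y, (p : ℝ) < y → y < x → R₂ (f y) (f x))} with hC
  have hsub : RtSet f R₁ ∩ LtSet f R₂ ⊆ ⋃ p : ℚ, ⋃ q : ℚ, C p q := by
    rintro x ⟨⟨z, hxz, hz⟩, ⟨w, hwx, hw⟩⟩
    obtain ⟨q, hq1, hq2⟩ := exists_rat_btwn hxz
    obtain ⟨p, hp1, hp2⟩ := exists_rat_btwn hwx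
    refine Set.mem_iUnion.2 ⟨p, Set.mem_iUnion.2 ⟨q, hp2, hq1, ?_, ?_⟩⟩
    · exact fun y hy1 hy2 => hz y hy1 (lt_trans hy2 hq2)
    · exact fun y hy1 hy2 => hw y (lt_trans hp1 hy1) hy2
  have hsing : ∀ p q : ℚ, (C p q).Subsingleton := by
    intro p q x hx x' hx'
    by_contra hne
    have haux : ∀ u u' : ℝ, u ∈ C p q → u' ∈ C p q → u < u' → False := by
      rintro u u' ⟨hu1, hu2, hu3, hu4⟩ ⟨hu'1, hu'2, hu'3, hu'4⟩ huu
      exact hbad (f u') (f u) (hu3 u' huu hu'2) (hu'4 u hu1 huu)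
    rcases lt_trichotomy x x' with hlt' | heq | hgt
    · exact haux x x' hx hx' hlt'
    · exact hne heq
    · exact haux x' x hx' hx hgt
  exact Set.Countable.mono hsub
    (Set.countable_iUnion fun p => Set.countable_iUnion fun q => (hsing p q).countable)

lemma incrOn {a b : ℝ}
    (hU : ∀ x ∈ Set.Ioo a b, x ∈ RtSet f (fun s t => t < s))
    (hD : ∀ x ∈ Set.Ioo a b, x ∈ LtSet f (fun s t => s < t)) :
    StrictMonoOn f (Set.Ioo a b) := by
  intro x hx y hy hxy
  set T : Set ℝ := {w | w ∈ Set.Ioc x y ∧ ∀ z, x < z → z < w → f x < f z} with hT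
  obtain ⟨z₀, hxz₀, hz₀⟩ := hU x hx
  have hw₀ : min z₀ y ∈ T := by
    refine ⟨⟨lt_min hxz₀ hxy, min_le_right _ _⟩, fun z hz1 hz2 => ?_⟩
    exact hz₀ z hz1 (lt_of_lt_of_le hz2 (min_le_left _ _))
  have hbdd : BddAbove T := ⟨y, fun w hw => hw.1.2⟩
  have hne : T.Nonempty := ⟨_, hw₀⟩
  set c := sSup T with hc
  have hxc : x < c := lt_of_lt_of_le (lt_min hxz₀ hxy) (le_csSup hbdd hw₀)
  have hcy : c ≤ y := csSup_le hne fun w hw => hw.1.2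
  have hcmem : c ∈ Set.Ioo a b := ⟨lt_trans hx.1 hxc, lt_of_le_of_lt hcy hy.2⟩
  have key : ∀ z, x < z → z < c → f x < f z := by
    intro z hz1 hz2
    obtain ⟨w, hwT, hzw⟩ := exists_lt_of_lt_csSup hne hz2
    exact hwT.2 z hz1 hzw
  have hfc : f x < f c := by
    obtain ⟨w', hw'c, hw'⟩ := hD c hcmem
    set z := (max w' x + c) / 2 with hz
    have h1 : max w' x < c := max_lt hw'c hxc
    have hz1 : x < z := by have := le_max_right w' x; simp only [hz]; linarith
    have hz2 : w' < z := by have := le_max_left w' x; simp only [hz]; linarith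
    have hz3 : z < c := by simp only [hz]; linarith
    exact lt_trans (key z hz1 hz3) (hw' z hz2 hz3)
  rcases eq_or_lt_of_le hcy with heq | hlt'
  · rw [← heq]; exact hfc
  · exfalso
    obtain ⟨z₁, hcz₁, hz₁⟩ := hU c hcmem
    have hw₂ : min z₁ y ∈ T := by
      refine ⟨⟨lt_trans hxc (lt_min hcz₁ hlt'), min_le_right _ _⟩, fun z hz1 hz2 => ?_⟩
      rcases lt_trichotomy z c with h' | h' | h'
      · exact key z hz1 h'
      · rw [h']; exact hfc
      · exact lt_trans hfc (hz₁ z h' (lt_of_lt_of_le hz2 (min_le_left _ _)))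
    have : min z₁ y ≤ c := le_csSup hbdd hw₂
    have : c < min z₁ y := lt_min hcz₁ hlt'
    linarith

lemma glueMono {s : Set ℝ} (hs : s.OrdConnected)
    (H : ∀ x ∈ s, ∃ u v, u < x ∧ x < v ∧ StrictMonoOn f (Set.Ioo u v)) :
    StrictMonoOn f s := by
  intro x hx y hy hxy
  set T : Set ℝ := {w | w ∈ Set.Ioc x y ∧ StrictMonoOn f (Set.Icc x w)} with hT
  obtain ⟨u₀, v₀, hu₀, hv₀, hm₀⟩ := H x hx
  have hw₀ : min ((x + v₀) / 2) y ∈ T := by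
    constructor
    · exact ⟨lt_min (by linarith) hxy, min_le_right _ _⟩
    · refine hm₀.mono fun z hz => ?_
      have h1 := hz.1
      have h2 := hz.2
      have h3 : z ≤ (x + v₀) / 2 := le_trans h2 (min_le_left _ _)
      exact ⟨by linarith, by linarith⟩
  have hbdd : BddAbove T := ⟨y, fun w hw => hw.1.2⟩
  have hne : T.Nonempty := ⟨_, hw₀⟩
  set c := sSup T with hc
  have hxc : x < c := lt_of_lt_of_le hw₀.1.1 (le_csSup hbdd hw₀)
  have hcy : c ≤ y := csSup_le hne fun w hw => hw.1.2
  have hcs : c ∈ s := hs.out hx hy ⟨le_of_lt hxc, hcy⟩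
  obtain ⟨u, v, huc, hcv, hm⟩ := H c hcs
  obtain ⟨w, hwT, hwl⟩ := exists_lt_of_lt_csSup hne (max_lt huc hxc)
  have hwu : u < w := lt_of_le_of_lt (le_max_left _ _) hwl
  have hwc : w ≤ c := le_csSup hbdd hwT
  set c' := min ((c + v) / 2) y with hc'
  have hcc' : c ≤ c' := le_min (by linarith) hcy
  have hc'v : c' < v := lt_of_le_of_lt (min_le_left _ _) (by linarith)
  have claim : StrictMonoOn f (Set.Icc x c') := by
    intro z hz z' hz' hzz'
    rcases le_or_gt z' w with hle | hgt
    · exact hwT.2 ⟨hz.1, le_trans (le_of_lt hzz') hle⟩ ⟨le_trans hz.1 (le_of_lt hzz'), hle⟩ hzz'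
    · have hz'uv : z' ∈ Set.Ioo u v := ⟨lt_trans hwu hgt, lt_of_le_of_lt hz'.2 hc'v⟩
      rcases le_or_gt z u with hzu | hzu
      · have h1 : f z < f w := hwT.2 ⟨hz.1, le_of_lt (lt_of_le_of_lt hzu hwu)⟩
          ⟨le_trans hz.1 (le_of_lt (lt_of_le_of_lt hzu hwu)), le_refl _⟩
          (lt_of_le_of_lt hzu hwu)
        have h2 : f w < f z' := hm ⟨hwu, lt_of_le_of_lt hwc (lt_of_le_of_lt hcc' hc'v)⟩ hz'uv hgt
        exact lt_trans h1 h2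
      · exact hm ⟨hzu, lt_trans hzz' hz'uv.2⟩ hz'uv hzz'
  have hc'T : c' ∈ T := ⟨⟨lt_of_lt_of_le hxc hcc', min_le_right _ _⟩, claim⟩
  rcases eq_or_lt_of_le hcy with heq | hlt'
  · have hc'y : c' = y := by
      rw [hc']; rw [← heq]; exact min_eq_right (by linarith)
    have := claim (a := x) ⟨le_refl x, by rw [hc'y]; exact le_of_lt hxy⟩
      (b := y) ⟨le_of_lt hxy, by rw [hc'y]⟩ hxy
    exact this
  · exfalso
    have h1 : c' ≤ c := le_csSup hbdd hc'T
    have h2 : c < c' := lt_min (by linarith) hlt'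
    linarith

lemma glueConst {s : Set ℝ} (hs : s.OrdConnected)
    (H : ∀ x ∈ s, ∃ u v, u < x ∧ x < v ∧ ∀ y ∈ Set.Ioo u v, f y = f x) :
    ∀ x ∈ s, ∀ y ∈ s, f x = f y := by
  have aux : ∀ x ∈ s, ∀ y ∈ s, x < y → f x = f y := by
    intro x hx y hy hxy
    set T : Set ℝ := {w | w ∈ Set.Ioc x y ∧ ∀ z ∈ Set.Icc x w, f z = f x} with hT
    obtain ⟨u₀, v₀, hu₀, hv₀, hm₀⟩ := H x hx
    have hw₀ : min ((x + v₀) / 2) y ∈ T := by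
      refine ⟨⟨lt_min (by linarith) hxy, min_le_right _ _⟩, fun z hz => ?_⟩
      rcases eq_or_lt_of_le hz.1 with heq | hlt'
      · rw [← heq]
      · refine hm₀ z ⟨by linarith [hz.1], ?_⟩
        have := le_trans hz.2 (min_le_left _ _)
        linarith
    have hbdd : BddAbove T := ⟨y, fun w hw => hw.1.2⟩
    have hne : T.Nonempty := ⟨_, hw₀⟩
    set c := sSup T with hc
    have hxc : x < c := lt_of_lt_of_le hw₀.1.1 (le_csSup hbdd hw₀)
    have hcy : c ≤ y := csSup_le hne fun w hw => hw.1.2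
    have hcs : c ∈ s := hs.out hx hy ⟨le_of_lt hxc, hcy⟩
    obtain ⟨u, v, huc, hcv, hm⟩ := H c hcs
    obtain ⟨w, hwT, hwl⟩ := exists_lt_of_lt_csSup hne (max_lt huc hxc)
    have hwu : u < w := lt_of_le_of_lt (le_max_left _ _) hwl
    have hwx : x < w := lt_of_le_of_lt (le_max_right _ _) hwl
    have hwc : w ≤ c := le_csSup hbdd hwT
    have hfc : f c = f x := by
      have h1 : f w = f x := hwT.2 w ⟨le_of_lt hwx, le_refl _⟩
      have h2 : f w = f c := hm w ⟨hwu, by linarith⟩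
      rw [← h1, h2]
    set c' := min ((c + v) / 2) y with hc'
    have hcc' : c ≤ c' := le_min (by linarith) hcy
    have hc'v : c' < v := lt_of_le_of_lt (min_le_left _ _) (by linarith)
    have claim : ∀ z ∈ Set.Icc x c', f z = f x := by
      intro z hz
      rcases le_or_gt z w with hle | hgt
      · exact hwT.2 z ⟨hz.1, hle⟩
      · have : f z = f c := hm z ⟨lt_trans hwu hgt, lt_of_le_of_lt hz.2 hc'v⟩
        rw [this, hfc]
    have hc'T : c' ∈ T := ⟨⟨lt_of_lt_of_le hxc hcc', min_le_right _ _⟩, claim⟩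
    rcases eq_or_lt_of_le hcy with heq | hlt'
    · have hc'y : c' = y := by rw [hc']; rw [← heq]; exact min_eq_right (by linarith)
      exact (claim y ⟨le_of_lt hxy, by rw [hc'y]⟩).symm
    · exfalso
      have h1 : c' ≤ c := le_csSup hbdd hc'T
      have h2 : c < c' := lt_min (by linarith) hlt'
      linarith
  intro x hx y hy
  rcases lt_trichotomy x y with h' | h' | h'
  · exact aux x hx y hy h'
  · rw [h']
  · exact (aux y hy x hx h').symm

end Analysis2

section Core
variable {L : FirstOrder.Language} [L.Structure ℝ]
variable (hlt : Set.Definable (Set.univ : Set ℝ) L {v : Fin 2 → ℝ | v 0 < v 1}) {h : ℝ → ℝ}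
  (hdef : Set.Definable (Set.univ : Set ℝ) L {v : Fin 2 → ℝ | v 1 = h (v 0)})
  (homin : ∀ s : Set (Fin 1 → ℝ), Set.Definable (Set.univ : Set ℝ) L s →
      ∃ 𝒞 : Finset (Set ℝ), ((fun v : Fin 1 → ℝ => v 0) '' s) = ⋃₀ (𝒞 : Set (Set ℝ)) ∧
        ∀ t ∈ 𝒞, (∃ a : ℝ, t = {a}) ∨ (IsOpen t ∧ t.OrdConnected))

include homin in
lemma decompSet (A : Set ℝ)
    (hA : Set.Definable (Set.univ : Set ℝ) L {v : Fin 1 → ℝ | v 0 ∈ A}) :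
    ∃ 𝒞 : Finset (Set ℝ), A = ⋃₀ (𝒞 : Set (Set ℝ)) ∧ Pieces 𝒞 := by
  obtain ⟨𝒞, him, hp⟩ := homin _ hA
  refine ⟨𝒞, ?_, hp⟩
  rw [← him]
  ext x
  simp only [Set.mem_image, mem_setOf_eq]
  constructor
  · intro hx; exact ⟨fun _ => x, hx, rfl⟩
  · rintro ⟨v, hv, rfl⟩; exact hv

include hlt hdef homin in
lemma trichotRight (x : ℝ) :
    x ∈ RtSet h (fun s t => t < s) ∨ x ∈ RtSet h (fun s t => s < t) ∨
      x ∈ RtSet h (fun s t => s = t) := by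
  obtain ⟨𝒞g, hAg, hPg⟩ := decompSet homin {y : ℝ | x < y ∧ h x < h y}
    (dParamRight hlt hdef (R := fun s t => t < s) (dPull2 (Q := fun a b => a < b) hlt 1 0) x)
  obtain ⟨𝒞l, hAl, hPl⟩ := decompSet homin {y : ℝ | x < y ∧ h y < h x}
    (dParamRight hlt hdef (R := fun s t => s < t) hlt x)
  obtain ⟨𝒞e, hAe, hPe⟩ := decompSet homin {y : ℝ | x < y ∧ h y = h x}
    (dParamRight hlt hdef (R := fun s t => s = t) (dEqd hlt) x)
  rcases dichotRight hPg x with ⟨δ, hδ, hful⟩ | ⟨δ₁, hδ₁, hemp₁⟩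
  · left
    refine ⟨x + δ, by linarith, fun y h1 h2 => ?_⟩
    have : y ∈ {y : ℝ | x < y ∧ h x < h y} := by rw [hAg]; exact hful ⟨h1, h2⟩
    exact this.2
  rcases dichotRight hPl x with ⟨δ, hδ, hful⟩ | ⟨δ₂, hδ₂, hemp₂⟩
  · right; left
    refine ⟨x + δ, by linarith, fun y h1 h2 => ?_⟩
    have : y ∈ {y : ℝ | x < y ∧ h y < h x} := by rw [hAl]; exact hful ⟨h1, h2⟩
    exact this.2
  rcases dichotRight hPe x with ⟨δ, hδ, hful⟩ | ⟨δ₃, hδ₃, hemp₃⟩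
  · right; right
    refine ⟨x + δ, by linarith, fun y h1 h2 => ?_⟩
    have : y ∈ {y : ℝ | x < y ∧ h y = h x} := by rw [hAe]; exact hful ⟨h1, h2⟩
    exact this.2
  exfalso
  set δ := min δ₁ (min δ₂ δ₃) with hδ
  have hδpos : 0 < δ := lt_min hδ₁ (lt_min hδ₂ hδ₃)
  set y := x + δ / 2 with hy
  have hy1 : x < y := by simp only [hy]; linarith
  have hyin : ∀ δ' : ℝ, δ ≤ δ' → y ∈ Set.Ioo x (x + δ') := by
    intro δ' hle
    exact ⟨hy1, by simp only [hy]; linarith⟩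
  rcases lt_trichotomy (h y) (h x) with hc | hc | hc
  · have : y ∈ Set.Ioo x (x + δ₂) ∩ ⋃₀ (𝒞l : Set (Set ℝ)) :=
      ⟨hyin δ₂ (le_trans (min_le_right _ _) (min_le_left _ _)), by rw [← hAl]; exact ⟨hy1, hc⟩⟩
    rw [hemp₂] at this; exact this
  · have : y ∈ Set.Ioo x (x + δ₃) ∩ ⋃₀ (𝒞e : Set (Set ℝ)) :=
      ⟨hyin δ₃ (le_trans (min_le_right _ _) (min_le_right _ _)), by
        rw [← hAe]; exact ⟨hy1, hc⟩⟩
    rw [hemp₃] at this; exact this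
  · have : y ∈ Set.Ioo x (x + δ₁) ∩ ⋃₀ (𝒞g : Set (Set ℝ)) :=
      ⟨hyin δ₁ (min_le_left _ _), by rw [← hAg]; exact ⟨hy1, hc⟩⟩
    rw [hemp₁] at this; exact this

include hlt hdef homin in
lemma trichotLeft (x : ℝ) :
    x ∈ LtSet h (fun s t => t < s) ∨ x ∈ LtSet h (fun s t => s < t) ∨
      x ∈ LtSet h (fun s t => s = t) := by
  obtain ⟨𝒞g, hAg, hPg⟩ := decompSet homin {y : ℝ | y < x ∧ h x < h y}
    (dParamLeft hlt hdef (R := fun s t => t < s) (dPull2 (Q := fun a b => a < b) hlt 1 0) x)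
  obtain ⟨𝒞l, hAl, hPl⟩ := decompSet homin {y : ℝ | y < x ∧ h y < h x}
    (dParamLeft hlt hdef (R := fun s t => s < t) hlt x)
  obtain ⟨𝒞e, hAe, hPe⟩ := decompSet homin {y : ℝ | y < x ∧ h y = h x}
    (dParamLeft hlt hdef (R := fun s t => s = t) (dEqd hlt) x)
  rcases dichotLeft hPg x with ⟨δ, hδ, hful⟩ | ⟨δ₁, hδ₁, hemp₁⟩
  · left
    refine ⟨x - δ, by linarith, fun y h1 h2 => ?_⟩
    have : y ∈ {y : ℝ | y < x ∧ h x < h y} := by rw [hAg]; exact hful ⟨h1, h2⟩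
    exact this.2
  rcases dichotLeft hPl x with ⟨δ, hδ, hful⟩ | ⟨δ₂, hδ₂, hemp₂⟩
  · right; left
    refine ⟨x - δ, by linarith, fun y h1 h2 => ?_⟩
    have : y ∈ {y : ℝ | y < x ∧ h y < h x} := by rw [hAl]; exact hful ⟨h1, h2⟩
    exact this.2
  rcases dichotLeft hPe x with ⟨δ, hδ, hful⟩ | ⟨δ₃, hδ₃, hemp₃⟩
  · right; right
    refine ⟨x - δ, by linarith, fun y h1 h2 => ?_⟩
    have : y ∈ {y : ℝ | y < x ∧ h y = h x} := by rw [hAe]; exact hful ⟨h1, h2⟩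
    exact this.2
  exfalso
  set δ := min δ₁ (min δ₂ δ₃) with hδ
  have hδpos : 0 < δ := lt_min hδ₁ (lt_min hδ₂ hδ₃)
  set y := x - δ / 2 with hy
  have hy1 : y < x := by simp only [hy]; linarith
  have hyin : ∀ δ' : ℝ, δ ≤ δ' → y ∈ Set.Ioo (x - δ') x := by
    intro δ' hle
    exact ⟨by simp only [hy]; linarith, hy1⟩
  rcases lt_trichotomy (h y) (h x) with hc | hc | hc
  · have : y ∈ Set.Ioo (x - δ₂) x ∩ ⋃₀ (𝒞l : Set (Set ℝ)) :=
      ⟨hyin δ₂ (le_trans (min_le_right _ _) (min_le_left _ _)), by rw [← hAl]; exact ⟨hy1, hc⟩⟩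
    rw [hemp₂] at this; exact this
  · have : y ∈ Set.Ioo (x - δ₃) x ∩ ⋃₀ (𝒞e : Set (Set ℝ)) :=
      ⟨hyin δ₃ (le_trans (min_le_right _ _) (min_le_right _ _)), by
        rw [← hAe]; exact ⟨hy1, hc⟩⟩
    rw [hemp₃] at this; exact this
  · have : y ∈ Set.Ioo (x - δ₁) x ∩ ⋃₀ (𝒞g : Set (Set ℝ)) :=
      ⟨hyin δ₁ (min_le_left _ _), by rw [← hAg]; exact ⟨hy1, hc⟩⟩
    rw [hemp₁] at this; exact this

end Core

lemma ptsFinite (𝒞 : Finset (Set ℝ)) : {p : ℝ | {p} ∈ 𝒞}.Finite :=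
  ((𝒞.finite_toSet).image sSup).subset (fun p hp => ⟨{p}, hp, csSup_singleton p⟩)

lemma memScon {f : ℝ → ℝ} {x : ℝ}
    (hx : x ∈ RtSet f (fun s t => s = t) ∩ LtSet f (fun s t => s = t)) : x ∈ Scon f := by
  obtain ⟨⟨z, hxz, hr⟩, ⟨w, hwx, hl⟩⟩ := hx
  refine ⟨w, z, hwx, hxz, fun y h1 h2 => ?_⟩
  rcases lt_trichotomy y x with h' | h' | h'
  · exact hl y h1 h'
  · rw [h']
  · exact hr y h' h2

lemma subInc {f : ℝ → ℝ} {c d : ℝ} (hcd : c < d)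
    (hsub : Set.Ioo c d ⊆ RtSet f (fun s t => t < s) ∩ LtSet f (fun s t => s < t)) :
    ∀ x ∈ Set.Ioo c d, x ∈ Sinc f := by
  have hsm : StrictMonoOn f (Set.Ioo c d) :=
    incrOn (fun x hx => (hsub hx).1) (fun x hx => (hsub hx).2)
  intro x hx
  exact ⟨c, d, hx.1, hx.2, fun y z h1 h2 h3 =>
    hsm ⟨h1, lt_trans h2 h3⟩ ⟨lt_trans h1 h2, h3⟩ h2⟩

lemma subDec {f : ℝ → ℝ} {c d : ℝ} (hcd : c < d)
    (hsub : Set.Ioo c d ⊆ RtSet f (fun s t => s < t) ∩ LtSet f (fun s t => t < s)) :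
    ∀ x ∈ Set.Ioo c d, x ∈ Sdec f := by
  have hsm : StrictMonoOn (fun t => -(f t)) (Set.Ioo c d) := by
    apply incrOn
    · intro x hx
      obtain ⟨z, hxz, hz⟩ := (hsub hx).1
      exact ⟨z, hxz, fun y h1 h2 => neg_lt_neg (hz y h1 h2)⟩
    · intro x hx
      obtain ⟨w, hwx, hw⟩ := (hsub hx).2
      exact ⟨w, hwx, fun y h1 h2 => neg_lt_neg (hw y h1 h2)⟩
  intro x hx
  refine ⟨c, d, hx.1, hx.2, fun y z h1 h2 h3 => ?_⟩
  have := hsm (a := y) ⟨h1, lt_trans h2 h3⟩ (b := z) ⟨lt_trans h1 h2, h3⟩ h2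
  simpa using this

section Core2
variable {L : FirstOrder.Language} [L.Structure ℝ]
variable (hlt : Set.Definable (Set.univ : Set ℝ) L {v : Fin 2 → ℝ | v 0 < v 1}) {h : ℝ → ℝ}
  (hdef : Set.Definable (Set.univ : Set ℝ) L {v : Fin 2 → ℝ | v 1 = h (v 0)})
  (homin : ∀ s : Set (Fin 1 → ℝ), Set.Definable (Set.univ : Set ℝ) L s →
      ∃ 𝒞 : Finset (Set ℝ), ((fun v : Fin 1 → ℝ => v 0) '' s) = ⋃₀ (𝒞 : Set (Set ℝ)) ∧
        ∀ t ∈ 𝒞, (∃ a : ℝ, t = {a}) ∨ (IsOpen t ∧ t.OrdConnected))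

include hlt hdef homin in
lemma dCombo {σ τ : ℝ → ℝ → Prop}
    (hσ : Set.Definable (Set.univ : Set ℝ) L {w : Fin 2 → ℝ | σ (w 0) (w 1)})
    (hτ : Set.Definable (Set.univ : Set ℝ) L {w : Fin 2 → ℝ | τ (w 0) (w 1)}) :
    ∃ 𝒞 : Finset (Set ℝ), (RtSet h σ ∩ LtSet h τ) = ⋃₀ (𝒞 : Set (Set ℝ)) ∧ Pieces 𝒞 := by
  apply decompSet homin
  exact dInter (P := fun v : Fin 1 → ℝ => v 0 ∈ RtSet h σ) (Q := fun v => v 0 ∈ LtSet h τ)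
    (dRtSet hlt hdef hσ) (dLtSet hlt hdef hτ)

include hlt hdef homin in
lemma posIntervalS {a b : ℝ} (hab : a < b) :
    ∃ x ∈ Set.Ioo a b, x ∈ Sinc h ∪ Sdec h ∪ Scon h := by
  classical
  set Rg : ℝ → ℝ → Prop := fun s t => t < s with hRg
  set Rl : ℝ → ℝ → Prop := fun s t => s < t with hRl
  set Re : ℝ → ℝ → Prop := fun s t => s = t with hRe
  have dg : Set.Definable (Set.univ : Set ℝ) L {w : Fin 2 → ℝ | Rg (w 0) (w 1)} :=
    dPull2 (Q := fun a b => a < b) hlt 1 0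
  have dl : Set.Definable (Set.univ : Set ℝ) L {w : Fin 2 → ℝ | Rl (w 0) (w 1)} := hlt
  have de : Set.Definable (Set.univ : Set ℝ) L {w : Fin 2 → ℝ | Re (w 0) (w 1)} := dEqd hlt
  obtain ⟨𝒞gg, hgg, hPgg⟩ := dCombo hlt hdef homin dg dg
  obtain ⟨𝒞gl, hgl, hPgl⟩ := dCombo hlt hdef homin dg dl
  obtain ⟨𝒞ge, hge, hPge⟩ := dCombo hlt hdef homin dg de
  obtain ⟨𝒞lg, hlg, hPlg⟩ := dCombo hlt hdef homin dl dg
  obtain ⟨𝒞ll, hll, hPll⟩ := dCombo hlt hdef homin dl dl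
  obtain ⟨𝒞le, hle', hPle⟩ := dCombo hlt hdef homin dl de
  obtain ⟨𝒞eg, heg, hPeg⟩ := dCombo hlt hdef homin de dg
  obtain ⟨𝒞el, hel, hPel⟩ := dCombo hlt hdef homin de dl
  obtain ⟨𝒞ee, hee, hPee⟩ := dCombo hlt hdef homin de de
  set F : Set ℝ := {p | {p} ∈ 𝒞gg} ∪ ({p | {p} ∈ 𝒞gl} ∪ ({p | {p} ∈ 𝒞ge} ∪
    ({p | {p} ∈ 𝒞lg} ∪ ({p | {p} ∈ 𝒞ll} ∪ ({p | {p} ∈ 𝒞le} ∪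
    ({p | {p} ∈ 𝒞eg} ∪ ({p | {p} ∈ 𝒞el} ∪ {p | {p} ∈ 𝒞ee}))))))) with hF
  have hFfin : F.Finite := by
    refine Set.Finite.union (ptsFinite _) (Set.Finite.union (ptsFinite _)
      (Set.Finite.union (ptsFinite _) (Set.Finite.union (ptsFinite _)
      (Set.Finite.union (ptsFinite _) (Set.Finite.union (ptsFinite _)
      (Set.Finite.union (ptsFinite _) (Set.Finite.union (ptsFinite _) (ptsFinite _))))))))
  set U : Set ℝ := Set.Ioo a b \ F with hU
  have hUopen : IsOpen U := IsOpen.sdiff isOpen_Ioo hFfin.isClosed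
  have hUne : U.Nonempty := ((Set.Ioo_infinite hab).diff hFfin).nonempty
  obtain ⟨x₁, hx₁U⟩ := hUne
  have hx₁ab : x₁ ∈ Set.Ioo a b := hx₁U.1
  -- generic locate step
  have locate : ∀ (A : Set ℝ) (𝒞 : Finset (Set ℝ)), A = ⋃₀ (𝒞 : Set (Set ℝ)) → Pieces 𝒞 →
      x₁ ∈ A → ({p | {p} ∈ 𝒞} ⊆ F) →
      ∃ c₁ d₁, c₁ < x₁ ∧ x₁ < d₁ ∧ Set.Ioo c₁ d₁ ⊆ A ∧ Set.Ioo c₁ d₁ ⊆ Set.Ioo a b := by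
    intro A 𝒞 hA hP hx₁A hpts
    rw [hA] at hx₁A
    obtain ⟨t, ht𝒞, hx₁t⟩ := hx₁A
    rcases hP t ht𝒞 with ⟨p, rfl⟩ | ⟨hop, hoc⟩
    · exfalso
      rw [Set.mem_singleton_iff] at hx₁t
      subst hx₁t
      exact hx₁U.2 (hpts ht𝒞)
    · obtain ⟨c₁, d₁, hc₁, hd₁, hsub⟩ := open_sub_Ioo (hop.inter hUopen) ⟨hx₁t, hx₁U⟩
      refine ⟨c₁, d₁, hc₁, hd₁, ?_, ?_⟩
      · intro z hz
        rw [hA]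
        exact ⟨t, ht𝒞, (hsub hz).1⟩
      · intro z hz
        exact ((hsub hz).2).1
  have hFsub : ∀ p, p ∈ F → p ∈ F := fun p hp => hp
  -- cover
  rcases trichotRight hlt hdef homin x₁ with hRt | hRt | hRt <;>
    rcases trichotLeft hlt hdef homin x₁ with hLt | hLt | hLt
  -- (g,g) bad
  · obtain ⟨c₁, d₁, h1, h2, hsub, _⟩ := locate _ 𝒞gg hgg hPgg ⟨hRt, hLt⟩
      (fun p hp => Set.mem_union_left _ hp)
    exact absurd ((badCountable (f := h) (R₁ := Rg) (R₂ := Rg)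
      (fun s t h1 h2 => absurd h1 (not_lt.2 (le_of_lt h2)))).mono hsub)
      (not_countable_Ioo (lt_trans h1 h2))
  -- (g,l) good increasing
  · obtain ⟨c₁, d₁, h1, h2, hsub, hsubab⟩ := locate _ 𝒞gl hgl hPgl ⟨hRt, hLt⟩
      (fun p hp => Set.mem_union_right _ (Set.mem_union_left _ hp))
    have hmid : (c₁ + d₁) / 2 ∈ Set.Ioo c₁ d₁ := ⟨by linarith, by linarith⟩
    exact ⟨_, hsubab hmid, Set.mem_union_left _ (Set.mem_union_left _
      (subInc (lt_trans h1 h2) hsub _ hmid))⟩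
  -- (g,e) bad
  · obtain ⟨c₁, d₁, h1, h2, hsub, _⟩ := locate _ 𝒞ge hge hPge ⟨hRt, hLt⟩
      (fun p hp => Set.mem_union_right _ (Set.mem_union_right _ (Set.mem_union_left _ hp)))
    exact absurd ((badCountable (f := h) (R₁ := Rg) (R₂ := Re)
      (fun s t h1 h2 => absurd h1 (by rw [h2]; exact lt_irrefl _))).mono hsub)
      (not_countable_Ioo (lt_trans h1 h2))
  -- (l,g) good decreasing
  · obtain ⟨c₁, d₁, h1, h2, hsub, hsubab⟩ := locate _ 𝒞lg hlg hPlg ⟨hRt, hLt⟩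
      (fun p hp => Set.mem_union_right _ (Set.mem_union_right _ (Set.mem_union_right _
        (Set.mem_union_left _ hp))))
    have hmid : (c₁ + d₁) / 2 ∈ Set.Ioo c₁ d₁ := ⟨by linarith, by linarith⟩
    exact ⟨_, hsubab hmid, Set.mem_union_left _ (Set.mem_union_right _
      (subDec (lt_trans h1 h2) hsub _ hmid))⟩
  -- (l,l) bad
  · obtain ⟨c₁, d₁, h1, h2, hsub, _⟩ := locate _ 𝒞ll hll hPll ⟨hRt, hLt⟩
      (fun p hp => Set.mem_union_right _ (Set.mem_union_right _ (Set.mem_union_right _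
        (Set.mem_union_right _ (Set.mem_union_left _ hp)))))
    exact absurd ((badCountable (f := h) (R₁ := Rl) (R₂ := Rl)
      (fun s t h1 h2 => absurd h1 (not_lt.2 (le_of_lt h2)))).mono hsub)
      (not_countable_Ioo (lt_trans h1 h2))
  -- (l,e) bad
  · obtain ⟨c₁, d₁, h1, h2, hsub, _⟩ := locate _ 𝒞le hle' hPle ⟨hRt, hLt⟩
      (fun p hp => Set.mem_union_right _ (Set.mem_union_right _ (Set.mem_union_right _
        (Set.mem_union_right _ (Set.mem_union_right _ (Set.mem_union_left _ hp))))))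
    exact absurd ((badCountable (f := h) (R₁ := Rl) (R₂ := Re)
      (fun s t h1 h2 => absurd h1 (by rw [h2]; exact lt_irrefl _))).mono hsub)
      (not_countable_Ioo (lt_trans h1 h2))
  -- (e,g) bad
  · obtain ⟨c₁, d₁, h1, h2, hsub, _⟩ := locate _ 𝒞eg heg hPeg ⟨hRt, hLt⟩
      (fun p hp => Set.mem_union_right _ (Set.mem_union_right _ (Set.mem_union_right _
        (Set.mem_union_right _ (Set.mem_union_right _ (Set.mem_union_right _
        (Set.mem_union_left _ hp)))))))
    exact absurd ((badCountable (f := h) (R₁ := Re) (R₂ := Rg)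
      (fun s t h1 h2 => absurd h2 (by rw [h1]; exact lt_irrefl _))).mono hsub)
      (not_countable_Ioo (lt_trans h1 h2))
  -- (e,l) bad
  · obtain ⟨c₁, d₁, h1, h2, hsub, _⟩ := locate _ 𝒞el hel hPel ⟨hRt, hLt⟩
      (fun p hp => Set.mem_union_right _ (Set.mem_union_right _ (Set.mem_union_right _
        (Set.mem_union_right _ (Set.mem_union_right _ (Set.mem_union_right _
        (Set.mem_union_right _ (Set.mem_union_left _ hp))))))))
    exact absurd ((badCountable (f := h) (R₁ := Re) (R₂ := Rl)
      (fun s t h1 h2 => absurd h2 (by rw [h1]; exact lt_irrefl _))).mono hsub)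
      (not_countable_Ioo (lt_trans h1 h2))
  -- (e,e) good constant
  · exact ⟨x₁, hx₁ab, Set.mem_union_right _ (memScon ⟨hRt, hLt⟩)⟩

end Core2

def EndPts (𝒞 : Finset (Set ℝ)) : Set ℝ :=
  sSup '' {t | t ∈ 𝒞 ∧ t.Nonempty ∧ BddAbove t} ∪ sInf '' {t | t ∈ 𝒞 ∧ t.Nonempty ∧ BddBelow t}

lemma endsFinite (𝒞 : Finset (Set ℝ)) : (EndPts 𝒞).Finite := by
  refine Set.Finite.union (Set.Finite.image _ ?_) (Set.Finite.image _ ?_) <;>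
    exact (𝒞.finite_toSet).subset (fun t ht => ht.1)

lemma singletonEnd {𝒞 : Finset (Set ℝ)} {p : ℝ} (hp : {p} ∈ 𝒞) : p ∈ EndPts 𝒞 :=
  Set.mem_union_left _ ⟨{p}, ⟨hp, ⟨p, rfl⟩, bddAbove_singleton⟩, csSup_singleton p⟩

section Final
variable {L : FirstOrder.Language} [L.Structure ℝ]
variable (hlt : Set.Definable (Set.univ : Set ℝ) L {v : Fin 2 → ℝ | v 0 < v 1}) {h : ℝ → ℝ}
  (hdef : Set.Definable (Set.univ : Set ℝ) L {v : Fin 2 → ℝ | v 1 = h (v 0)})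
  (homin : ∀ s : Set (Fin 1 → ℝ), Set.Definable (Set.univ : Set ℝ) L s →
      ∃ 𝒞 : Finset (Set ℝ), ((fun v : Fin 1 → ℝ => v 0) '' s) = ⋃₀ (𝒞 : Set (Set ℝ)) ∧
        ∀ t ∈ 𝒞, (∃ a : ℝ, t = {a}) ∨ (IsOpen t ∧ t.OrdConnected))

include hlt hdef homin in
theorem mainResult :
    ∃ (N : ℕ) (a : Fin N → ℝ), StrictMono a ∧
      ∀ s : Set ℝ, IsOpen s → s.OrdConnected → (∀ i, a i ∉ s) →
        (∀ x ∈ s, ∀ y ∈ s, h x = h y) ∨ StrictMonoOn h s ∨ StrictAntiOn h s := by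
  classical
  obtain ⟨𝒞i, hi, hPi⟩ := decompSet homin (Sinc h) (dSinc hlt hdef)
  obtain ⟨𝒞d, hd, hPd⟩ := decompSet homin (Sdec h) (dSdec hlt hdef)
  obtain ⟨𝒞c, hc, hPc⟩ := decompSet homin (Scon h) (dScon hlt hdef)
  obtain ⟨𝒞x, hx, hPx⟩ := decompSet homin ((Sinc h ∪ Sdec h ∪ Scon h)ᶜ)
    ((((dSinc hlt hdef).union (dSdec hlt hdef)).union (dScon hlt hdef)).compl)
  set A : Set ℝ := EndPts 𝒞i ∪ (EndPts 𝒞d ∪ (EndPts 𝒞c ∪ EndPts 𝒞x)) with hA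
  have hAfin : A.Finite :=
    (endsFinite _).union ((endsFinite _).union ((endsFinite _).union (endsFinite _)))
  set F : Finset ℝ := hAfin.toFinset with hF
  refine ⟨F.card, fun i => (F.orderIsoOfFin rfl i : ℝ), ?_, ?_⟩
  · intro i j hij
    exact Subtype.coe_lt_coe.2 ((F.orderIsoOfFin rfl).strictMono hij)
  intro s hsopen hsoc havoid
  rcases Set.eq_empty_or_nonempty s with rfl | ⟨x₀, hx₀s⟩
  · left; intro x hx; exact absurd hx (Set.notMem_empty x)
  have hAs : A ∩ s = ∅ := by
    rw [Set.eq_empty_iff_forall_notMem]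
    rintro p ⟨hpA, hps⟩
    have hpF : p ∈ F := by rw [hF, Set.Finite.mem_toFinset]; exact hpA
    have := havoid ((F.orderIsoOfFin rfl).symm ⟨p, hpF⟩)
    simp only [OrderIso.apply_symm_apply] at this
    exact this hps
  have hAnotin : ∀ p ∈ A, p ∉ s := by
    intro p hp hps
    rw [Set.eq_empty_iff_forall_notMem] at hAs
    exact hAs p ⟨hp, hps⟩
  -- escape lemma
  have escape : ∀ (𝒞 : Finset (Set ℝ)) (t : Set ℝ), t ∈ 𝒞 → EndPts 𝒞 ⊆ A →
      t.OrdConnected → x₀ ∈ t → s ⊆ t := by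
    intro 𝒞 t ht hEA htoc hx₀t y hys
    by_contra hyt
    rcases lt_trichotomy y x₀ with hlt' | heq | hgt
    · have hbb : BddBelow t := by
        refine ⟨y, fun z hz => ?_⟩
        by_contra hzy
        push_neg at hzy
        exact hyt (htoc.out hz hx₀t ⟨le_of_lt hzy, le_of_lt hlt'⟩)
      have hIn : sInf t ∈ A := hEA (Set.mem_union_right _ ⟨t, ⟨ht, ⟨x₀, hx₀t⟩, hbb⟩, rfl⟩)
      have hIs : sInf t ∈ s := by
        refine hsoc.out hys hx₀s ⟨?_, ?_⟩
        · exact le_csInf ⟨x₀, hx₀t⟩ fun z hz => by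
            by_contra hzy
            push_neg at hzy
            exact hyt (htoc.out hz hx₀t ⟨le_of_lt hzy, le_of_lt hlt'⟩)
        · exact csInf_le hbb hx₀t
      exact hAnotin _ hIn hIs
    · exact hyt (heq ▸ hx₀t)
    · have hba : BddAbove t := by
        refine ⟨y, fun z hz => ?_⟩
        by_contra hzy
        push_neg at hzy
        exact hyt (htoc.out hx₀t hz ⟨le_of_lt hgt, le_of_lt hzy⟩)
      have hIn : sSup t ∈ A := hEA (Set.mem_union_left _ ⟨t, ⟨ht, ⟨x₀, hx₀t⟩, hba⟩, rfl⟩)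
      have hIs : sSup t ∈ s := by
        refine hsoc.out hx₀s hys ⟨?_, ?_⟩
        · exact le_csSup hba hx₀t
        · exact csSup_le ⟨x₀, hx₀t⟩ fun z hz => by
            by_contra hzy
            push_neg at hzy
            exact hyt (htoc.out hx₀t hz ⟨le_of_lt hgt, le_of_lt hzy⟩)
      exact hAnotin _ hIn hIs
  by_cases hx₀i : x₀ ∈ Sinc h
  · -- strictly increasing
    right; left
    have hx₀i' := hx₀i
    rw [hi] at hx₀i'
    obtain ⟨t, ht, hx₀t⟩ := hx₀i'
    rcases hPi t ht with ⟨p, rfl⟩ | ⟨hop, hoc⟩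
    · exfalso
      rw [Set.mem_singleton_iff] at hx₀t
      subst hx₀t
      exact hAnotin _ (Set.mem_union_left _ (singletonEnd ht)) hx₀s
    have hst : s ⊆ t := escape 𝒞i t ht (fun p hp => Set.mem_union_left _ hp) hoc hx₀t
    have hsS : s ⊆ Sinc h := fun y hy => by
      rw [hi]; exact ⟨t, ht, hst hy⟩
    refine glueMono hsoc fun x hxs => ?_
    obtain ⟨u, v, h1, h2, hm⟩ := hsS hxs
    exact ⟨u, v, h1, h2, fun y hy z hz hyz => hm y z hy.1 hyz hz.2⟩
  by_cases hx₀d : x₀ ∈ Sdec h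
  · -- strictly decreasing
    right; right
    have hx₀d' := hx₀d
    rw [hd] at hx₀d'
    obtain ⟨t, ht, hx₀t⟩ := hx₀d'
    rcases hPd t ht with ⟨p, rfl⟩ | ⟨hop, hoc⟩
    · exfalso
      rw [Set.mem_singleton_iff] at hx₀t
      subst hx₀t
      exact hAnotin _ (Set.mem_union_right _ (Set.mem_union_left _ (singletonEnd ht))) hx₀s
    have hst : s ⊆ t := escape 𝒞d t ht
      (fun p hp => Set.mem_union_right _ (Set.mem_union_left _ hp)) hoc hx₀t
    have hsS : s ⊆ Sdec h := fun y hy => by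
      rw [hd]; exact ⟨t, ht, hst hy⟩
    have hneg : StrictMonoOn (fun w => -(h w)) s := by
      refine glueMono hsoc fun x hxs => ?_
      obtain ⟨u, v, h1, h2, hm⟩ := hsS hxs
      exact ⟨u, v, h1, h2, fun y hy z hz hyz => neg_lt_neg (hm y z hy.1 hyz hz.2)⟩
    intro y hy z hz hyz
    have := hneg hy hz hyz
    simpa using this
  by_cases hx₀c : x₀ ∈ Scon h
  · -- constant
    left
    have hx₀c' := hx₀c
    rw [hc] at hx₀c'
    obtain ⟨t, ht, hx₀t⟩ := hx₀c'
    rcases hPc t ht with ⟨p, rfl⟩ | ⟨hop, hoc⟩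
    · exfalso
      rw [Set.mem_singleton_iff] at hx₀t
      subst hx₀t
      exact hAnotin _ (Set.mem_union_right _ (Set.mem_union_right _
        (Set.mem_union_left _ (singletonEnd ht)))) hx₀s
    have hst : s ⊆ t := escape 𝒞c t ht
      (fun p hp => Set.mem_union_right _ (Set.mem_union_right _ (Set.mem_union_left _ hp)))
      hoc hx₀t
    have hsS : s ⊆ Scon h := fun y hy => by
      rw [hc]; exact ⟨t, ht, hst hy⟩
    refine glueConst hsoc fun x hxs => ?_
    obtain ⟨u, v, h1, h2, hm⟩ := hsS hxs
    exact ⟨u, v, h1, h2, fun y hy => hm y hy.1 hy.2⟩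
  -- impossible: x₀ would be in the bad set X which contains no point
  exfalso
  have hx₀X : x₀ ∈ (Sinc h ∪ Sdec h ∪ Scon h)ᶜ := by
    intro hmem
    rcases hmem with hm | hm
    · rcases hm with hm | hm
      · exact hx₀i hm
      · exact hx₀d hm
    · exact hx₀c hm
  rw [hx] at hx₀X
  obtain ⟨t, ht, hx₀t⟩ := hx₀X
  rcases hPx t ht with ⟨p, rfl⟩ | ⟨hop, hoc⟩
  · rw [Set.mem_singleton_iff] at hx₀t
    subst hx₀t
    exact hAnotin _ (Set.mem_union_right _ (Set.mem_union_right _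
      (Set.mem_union_right _ (singletonEnd ht)))) hx₀s
  · obtain ⟨c₁, d₁, h1, h2, hsub⟩ := open_sub_Ioo hop hx₀t
    obtain ⟨y, hy, hyS⟩ := posIntervalS hlt hdef homin (lt_trans h1 h2)
    have hyX : y ∈ (Sinc h ∪ Sdec h ∪ Scon h)ᶜ := by
      rw [hx]
      exact ⟨t, ht, hsub hy⟩
    exact hyX hyS

end Final

theorem stmt_18 (L : FirstOrder.Language) [L.Structure ℝ]
    (hlt : Set.Definable (Set.univ : Set ℝ) L {v : Fin 2 → ℝ | v 0 < v 1})
    (hadd : Set.Definable (Set.univ : Set ℝ) L {v : Fin 3 → ℝ | v 0 + v 1 = v 2})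
    (hmul : Set.Definable (Set.univ : Set ℝ) L {v : Fin 3 → ℝ | v 0 * v 1 = v 2})
    (homin : ∀ s : Set (Fin 1 → ℝ), Set.Definable (Set.univ : Set ℝ) L s →
      ∃ 𝒞 : Finset (Set ℝ), ((fun v : Fin 1 → ℝ => v 0) '' s) = ⋃₀ (𝒞 : Set (Set ℝ)) ∧
        ∀ t ∈ 𝒞, (∃ a : ℝ, t = {a}) ∨ (IsOpen t ∧ t.OrdConnected))
    (h : ℝ → ℝ)
    (hdef : Set.Definable (Set.univ : Set ℝ) L {v : Fin 2 → ℝ | v 1 = h (v 0)}) :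
    ∃ (N : ℕ) (a : Fin N → ℝ), StrictMono a ∧
      ∀ s : Set ℝ, IsOpen s → s.OrdConnected → (∀ i, a i ∉ s) →
        (∀ x ∈ s, ∀ y ∈ s, h x = h y) ∨ StrictMonoOn h s ∨ StrictAntiOn h s := by
  exact mainResult hlt hdef homin
end
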